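/- arXiv:2501.06941 — 7 statements merged into one kernel-verified Lean document; each statement's English description precedes it below -/
import Mathlib

section
/- (Theorem 1, invariance) Suppose all parameters of the n-group behavior model are nonnegative (with r, q ∈ [0,1] and θ_l ∈ (0,1]). If a solution of the n-group behavior model has nonnegative initial values, with at least one S_i(0) > 0, and remains defined with total population N(t) > 0 on [0,T], then every component S_i(t), E_i(t), Ia_i(t), Is_i(t), Ih_i(t), R_i(t) is nonnegative for all t ∈ [0,T] and the sum of all components satisfies 0 < N(t) ≤ N(0); that is, the region Ω = { x ∈ ℝ_+^{6n} : 0 ≤ sum of all components of x ≤ N(0) } is positively invariant for the flow of the model. -/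
/-!
Nonnegativity is a Grönwall argument for `g = Σ_k (x_k⁻)²`, the squared distance of the state
to the nonnegative orthant. On `[0, T]` the components, `1 / N` and the factors
`exp (-a_j Σ Ih / N)` are bounded (continuous on a compact interval, `N > 0`), and sums and
products of bounded functions whose negative parts are `O(Σ_j x_j⁻)` keep both properties. The
right-hand side for `x_k` is built from such functions with nonnegative coefficients, up to terms
`m · x_k` with `m` bounded, which are harmless where `x_k ≤ 0`. So `x_k' ≥ -L Σ_j x_j⁻` where
`x_k ≤ 0`, whence `g' = -2 Σ_k x_k⁻ x_k' ≤ 2L (Σ_k x_k⁻)² ≤ 12 n L g`, and `g 0 = 0` forces `g = 0`.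

Summing all equations, the infection terms cancel and so do the influence terms, which only move
individuals between neighbouring groups; hence `N' = -δh Σ_i Ih_i ≤ 0` once `Ih ≥ 0`.
-/

/-- The influence term `T_i(X)` of the `n`-group behavior model:
`T_i(X) = (X_{i-1}/N) Σ_{j≥i} c^B_{j,i-1} N_j + (X_{i+1}/N) Σ_{j≤i} c^B_{j,i+1} N_j
          − (X_i/N) Σ_{j≠i} c^B_{j,i} N_j`,
where terms whose indices fall outside `1,…,n` are zero. Groups are indexed by
`i ∈ Finset.Icc 1 n ⊆ ℕ`. -/
noncomputable def influenceTerm (n : ℕ) (cB : ℕ → ℕ → ℝ) (Ngrp : ℕ → ℝ) (Ntot : ℝ)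
    (X : ℕ → ℝ) (i : ℕ) : ℝ :=
  (if 2 ≤ i then (X (i - 1) / Ntot) * ∑ j ∈ Finset.Icc i n, cB j (i - 1) * Ngrp j else 0)
    + (if i + 1 ≤ n then (X (i + 1) / Ntot) * ∑ j ∈ Finset.Icc 1 i, cB j (i + 1) * Ngrp j
        else 0)
    - (X i / Ntot) * ∑ j ∈ (Finset.Icc 1 n).erase i, cB j i * Ngrp j

/-- The force of infection `λ_i` of the `n`-group behavior model:
`λ_i = θ_l · c_i^A · (S_i/N) · Σ_j c_j^A (β_a Ia_j + β_i Is_j + β_h Ih_j)`, where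
`c_j^A = exp(−a_j Σ_k Ih_k / N)`. -/
noncomputable def forceOfInfection (n : ℕ) (βa βi βh θl : ℝ) (a : ℕ → ℝ) (Ntot : ℝ)
    (S Ia Is Ih : ℕ → ℝ) (i : ℕ) : ℝ :=
  θl * Real.exp (-a i * (∑ k ∈ Finset.Icc 1 n, Ih k) / Ntot) * (S i / Ntot) *
    ∑ j ∈ Finset.Icc 1 n,
      Real.exp (-a j * (∑ k ∈ Finset.Icc 1 n, Ih k) / Ntot) *
        (βa * Ia j + βi * Is j + βh * Ih j)

open Set Finset Topology

theorem negPart_add_le {α : Type*} [AddCommGroup α] [LinearOrder α] [IsOrderedAddMonoid α]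
    (a b : α) : (a + b)⁻ ≤ a⁻ + b⁻ := by
  rw [negPart_def]
  exact max_le ((neg_add a b).trans_le (add_le_add (neg_le_negPart a) (neg_le_negPart b)))
    (add_nonneg (negPart_nonneg a) (negPart_nonneg b))

theorem negPart_mul_le {y w U W : ℝ} (hy : |y| ≤ U) (hw : |w| ≤ W) :
    (y * w)⁻ ≤ W * y⁻ + U * w⁻ := by
  have hU : 0 ≤ U := (abs_nonneg y).trans hy
  have hW : 0 ≤ W := (abs_nonneg w).trans hw
  rw [negPart_def]
  refine max_le ?_ (by positivity)
  rcases le_total 0 y with hy0 | hy0 <;> rcases le_total 0 w with hw0 | hw0 <;>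
    simp only [abs_of_nonneg, abs_of_nonpos, negPart_eq_zero.2, negPart_eq_neg.2, *] at hy hw ⊢ <;>
    nlinarith

theorem hasDerivAt_negPart_sq (x : ℝ) : HasDerivAt (fun y : ℝ => y⁻ ^ 2) (-2 * x⁻) x := by
  have off_zero : ∀ y ≠ (0 : ℝ), HasDerivAt (fun y : ℝ => y⁻ ^ 2) (-2 * y⁻) y := by
    intro y hy
    rcases hy.lt_or_gt with hy | hy
    · have hsq : (fun z : ℝ => z⁻ ^ 2) =ᶠ[𝓝 y] fun z => z ^ 2 := by
        filter_upwards [eventually_lt_nhds hy] with z hz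
        rw [negPart_eq_neg.2 hz.le, neg_sq]
      rw [negPart_eq_neg.2 hy.le]
      simpa using (hasDerivAt_pow 2 y).congr_of_eventuallyEq hsq
    · have hzero : (fun z : ℝ => z⁻ ^ 2) =ᶠ[𝓝 y] fun _ => 0 := by
        filter_upwards [eventually_gt_nhds hy] with z hz
        rw [negPart_eq_zero.2 hz.le, zero_pow two_ne_zero]
      rw [negPart_eq_zero.2 hy.le, mul_zero]
      exact (hasDerivAt_const y 0).congr_of_eventuallyEq hzero
  exact hasDerivAt_of_hasDerivAt_of_ne' off_zero (by fun_prop) (by fun_prop) x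

theorem nonneg_of_quasipositive {ι : Type*} (s : Finset ι) {x : ι → ℝ → ℝ} {T : ℝ}
    (hx : ∀ k ∈ s, ∀ t ∈ Set.Icc 0 T, DifferentiableAt ℝ (x k) t)
    (h0 : ∀ k ∈ s, 0 ≤ x k 0)
    (hquasi : ∀ k ∈ s, ∃ L, ∀ t ∈ Set.Icc 0 T, x k t ≤ 0 →
      -deriv (x k) t ≤ L * ∑ j ∈ s, (x j t)⁻) :
    ∀ k ∈ s, ∀ t ∈ Set.Icc 0 T, 0 ≤ x k t := by
  choose! L hL using hquasi
  obtain ⟨M, hM⟩ := (s.image L).exists_le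
  set G : ℝ → ℝ := fun t => ∑ j ∈ s, (x j t)⁻
  set g : ℝ → ℝ := fun t => ∑ k ∈ s, (x k t)⁻ ^ 2
  set g' : ℝ → ℝ := fun t => ∑ k ∈ s, -2 * (x k t)⁻ * deriv (x k) t
  have hg : ∀ t ∈ Icc 0 T, HasDerivAt g (g' t) t := fun t ht =>
    HasDerivAt.fun_sum fun k hk =>
      ((hasDerivAt_negPart_sq _).comp t (hx k hk t ht).hasDerivAt).congr_deriv (by ring)
  have hg' : ∀ t ∈ Icc 0 T, g' t ≤ 2 * |M| * #s * g t := by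
    intro t ht
    have hterm : ∀ k ∈ s, -2 * (x k t)⁻ * deriv (x k) t ≤ 2 * M * G t * (x k t)⁻ := by
      intro k hk
      rcases le_or_gt (x k t) 0 with hxk | hxk
      · have hLM : L k * G t ≤ M * G t :=
          mul_le_mul_of_nonneg_right (hM _ (mem_image_of_mem L hk))
            (sum_nonneg fun j _ => negPart_nonneg _)
        nlinarith [hL k hk t ht hxk, negPart_nonneg (x k t)]
      · simp [negPart_eq_zero.2 hxk.le]
    calc g' t ≤ ∑ k ∈ s, 2 * M * G t * (x k t)⁻ := sum_le_sum hterm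
      _ = 2 * M * G t ^ 2 := by rw [← mul_sum, sq, mul_assoc]
      _ ≤ 2 * |M| * G t ^ 2 := by gcongr; exact le_abs_self M
      _ ≤ 2 * |M| * (#s * g t) := by gcongr; exact sq_sum_le_card_mul_sum_sq
      _ = 2 * |M| * #s * g t := by ring
  have hg_nonpos : ∀ t ∈ Icc 0 T, g t ≤ 0 := by
    have := le_gronwallBound_of_liminf_deriv_right_le (f := g) (δ := 0) (ε := 0)
      (fun t ht => (hg t ht).continuousAt.continuousWithinAt)
      (fun t ht _ hr => (hg t (Ico_subset_Icc_self ht)).hasDerivWithinAt.liminf_right_slope_le hr)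
      (sum_eq_zero fun k hk => by simp [negPart_eq_zero.2 (h0 k hk)]).le
      (fun t ht => by simpa using hg' t (Ico_subset_Icc_self ht))
    simpa [gronwallBound_ε0_δ0] using this
  intro k hk t ht
  have : (x k t)⁻ ^ 2 ≤ 0 :=
    (single_le_sum (f := fun j => (x j t)⁻ ^ 2) (fun j _ => sq_nonneg _) hk).trans
      (hg_nonpos t ht)
  exact negPart_eq_zero.1 (pow_eq_zero_iff two_ne_zero |>.1 (le_antisymm this (sq_nonneg _)))

def NegPartControlled (I : Set ℝ) (G z : ℝ → ℝ) : Prop :=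
  ∃ U V : ℝ, ∀ t ∈ I, |z t| ≤ U ∧ (z t)⁻ ≤ V * G t

namespace NegPartControlled

variable {I J : Set ℝ} {G y z m : ℝ → ℝ}

theorem of_continuousOn (hI : IsCompact I) (hz : ContinuousOn z I) (V : ℝ)
    (h : ∀ t ∈ I, (z t)⁻ ≤ V * G t) : NegPartControlled I G z := by
  obtain ⟨U, hU⟩ := hI.exists_bound_of_continuousOn hz
  exact ⟨U, V, fun t ht => ⟨hU t ht, h t ht⟩⟩

theorem of_continuousOn_nonneg (hI : IsCompact I) (hz : ContinuousOn z I)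
    (h : ∀ t ∈ I, 0 ≤ z t) : NegPartControlled I G z :=
  of_continuousOn hI hz 0 fun t ht => by simp [negPart_eq_zero.2 (h t ht)]

theorem const {α : ℝ} (hα : 0 ≤ α) : NegPartControlled I G fun _ => α :=
  ⟨α, 0, fun _ _ => by simp [abs_of_nonneg hα, negPart_eq_zero.2 hα]⟩

theorem mono (h : NegPartControlled I G z) (hJ : J ⊆ I) : NegPartControlled J G z :=
  let ⟨U, V, hUV⟩ := h
  ⟨U, V, fun t ht => hUV t (hJ ht)⟩

theorem bounded (h : NegPartControlled I G z) : ∃ C, ∀ t ∈ I, |z t| ≤ C :=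
  let ⟨U, _, hUV⟩ := h
  ⟨U, fun t ht => (hUV t ht).1⟩

theorem exists_neg_le (h : NegPartControlled I G z) : ∃ V, ∀ t ∈ I, -z t ≤ V * G t :=
  let ⟨_, V, hUV⟩ := h
  ⟨V, fun t ht => (neg_le_negPart _).trans (hUV t ht).2⟩

theorem congr (h : NegPartControlled I G y) (hyz : ∀ t ∈ I, y t = z t) :
    NegPartControlled I G z :=
  let ⟨U, V, hUV⟩ := h
  ⟨U, V, fun t ht => hyz t ht ▸ hUV t ht⟩

theorem add (hy : NegPartControlled I G y) (hz : NegPartControlled I G z) :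
    NegPartControlled I G fun t => y t + z t := by
  obtain ⟨U, V, hy⟩ := hy
  obtain ⟨U', V', hz⟩ := hz
  refine ⟨U + U', V + V', fun t ht => ⟨?_, ?_⟩⟩
  · exact (abs_add_le _ _).trans (add_le_add (hy t ht).1 (hz t ht).1)
  · linarith [negPart_add_le (y t) (z t), (hy t ht).2, (hz t ht).2]

theorem mul (hy : NegPartControlled I G y) (hz : NegPartControlled I G z) :
    NegPartControlled I G fun t => y t * z t := by
  obtain ⟨U, V, hy⟩ := hy
  obtain ⟨U', V', hz⟩ := hz
  refine ⟨U * U', U' * V + U * V', fun t ht => ⟨?_, ?_⟩⟩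
  · rw [abs_mul]
    exact mul_le_mul (hy t ht).1 (hz t ht).1 (abs_nonneg _) ((abs_nonneg _).trans (hy t ht).1)
  · have hU' : 0 ≤ U' := (abs_nonneg _).trans (hz t ht).1
    have hU : 0 ≤ U := (abs_nonneg _).trans (hy t ht).1
    calc (y t * z t)⁻ ≤ U' * (y t)⁻ + U * (z t)⁻ := negPart_mul_le (hy t ht).1 (hz t ht).1
      _ ≤ U' * (V * G t) + U * (V' * G t) := by gcongr; exacts [(hy t ht).2, (hz t ht).2]
      _ = (U' * V + U * V') * G t := by ring

theorem const_mul {α : ℝ} (hα : 0 ≤ α) (hz : NegPartControlled I G z) :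
    NegPartControlled I G fun t => α * z t :=
  (const hα).mul hz

theorem div {N : ℝ → ℝ} (hy : NegPartControlled I G y)
    (hN : NegPartControlled I G fun t => (N t)⁻¹) : NegPartControlled I G fun t => y t / N t :=
  (hy.mul hN).congr fun _ _ => (div_eq_mul_inv _ _).symm

theorem sum {ι : Type*} (s : Finset ι) {z : ι → ℝ → ℝ}
    (hz : ∀ j ∈ s, NegPartControlled I G (z j)) :
    NegPartControlled I G fun t => ∑ j ∈ s, z j t := by
  classical
  induction s using Finset.induction_on with
  | empty => simpa using const le_rfl
  | insert j s hj ih =>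
    simp only [sum_insert hj]
    exact (hz j (mem_insert_self j s)).add (ih fun k hk => hz k (mem_insert_of_mem hk))

/-- Subtracting `m * z` is harmless where `z ≤ 0`: then `-(m * z) ≤ |m| * z⁻`. -/
theorem sub_mul_of_nonpos (hy : NegPartControlled I G y) (hm : ∃ C, ∀ t ∈ I, |m t| ≤ C)
    (hz : NegPartControlled I G z) (hz0 : ∀ t ∈ I, z t ≤ 0) :
    NegPartControlled I G fun t => y t - m t * z t := by
  obtain ⟨U, V, hy⟩ := hy
  obtain ⟨C, hC⟩ := hm
  obtain ⟨U', V', hz⟩ := hz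
  refine ⟨U + C * U', V + C * V', fun t ht => ⟨?_, ?_⟩⟩
  · have hC0 : 0 ≤ C := (abs_nonneg _).trans (hC t ht)
    calc |y t - m t * z t| ≤ |y t| + |m t| * |z t| := by rw [← abs_mul]; exact abs_sub _ _
      _ ≤ U + C * U' := by gcongr; exacts [(hy t ht).1, hC t ht, (hz t ht).1]
  · have hmz : (-(m t * z t))⁻ ≤ C * (V' * G t) := by
      have hC0 : 0 ≤ C := (abs_nonneg _).trans (hC t ht)
      have hzG : -z t ≤ V' * G t := (neg_le_negPart _).trans (hz t ht).2
      rw [negPart_def, neg_neg]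
      refine max_le ?_ (mul_nonneg hC0 ((negPart_nonneg _).trans (hz t ht).2))
      nlinarith [neg_abs_le (m t), hC t ht, hz0 t ht]
    calc (y t - m t * z t)⁻ ≤ (y t)⁻ + (-(m t * z t))⁻ := negPart_add_le _ _
      _ ≤ V * G t + C * (V' * G t) := add_le_add (hy t ht).2 hmz
      _ = (V + C * V') * G t := by ring

end NegPartControlled

theorem sum_Icc_shift {M : Type*} [AddCommMonoid M] {n : ℕ} {f : ℕ → M} (h1 : f 1 = 0)
    (hn : f (n + 1) = 0) : ∑ i ∈ Finset.Icc 1 n, f (i + 1) = ∑ i ∈ Finset.Icc 1 n, f i :=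
  calc ∑ i ∈ Finset.Icc 1 n, f (i + 1) = ∑ i ∈ Finset.Icc 2 (n + 1), f i := by
        have := sum_map (Finset.Icc 1 n) (addRightEmbedding 1) f
        rw [map_add_right_Icc] at this
        exact this.symm
    _ = ∑ i ∈ Finset.Icc 1 (n + 1), f i :=
        sum_subset (Icc_subset_Icc_left one_le_two) fun i hi hi' => by
          obtain rfl : i = 1 := by simp only [Finset.mem_Icc] at hi hi'; omega
          exact h1
    _ = ∑ i ∈ Finset.Icc 1 n, f i :=
        (sum_subset (Icc_subset_Icc_right n.le_succ) fun i hi hi' => by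
          obtain rfl : i = n + 1 := by simp only [Finset.mem_Icc] at hi hi'; omega
          exact hn).symm

theorem sum_influenceTerm (n : ℕ) (cB : ℕ → ℕ → ℝ) (Ng : ℕ → ℝ) (N : ℝ) (X : ℕ → ℝ) :
    ∑ i ∈ Finset.Icc 1 n, influenceTerm n cB Ng N X i = 0 := by
  -- `up m` moves from group `m` to `m + 1`, `down m` from group `m` to `m - 1`.
  set up : ℕ → ℝ := fun m => X m / N * ∑ j ∈ Finset.Icc (m + 1) n, cB j m * Ng j
  set down : ℕ → ℝ := fun m => X m / N * ∑ j ∈ Finset.Icc 1 (m - 1), cB j m * Ng j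
  have h_from_below : ∑ i ∈ Finset.Icc 1 n,
      (if 2 ≤ i then X (i - 1) / N * ∑ j ∈ Finset.Icc i n, cB j (i - 1) * Ng j else 0) =
        ∑ m ∈ Finset.Icc 1 n, up m := by
    rw [← sum_Icc_shift (by simp) (by simp)]
    refine sum_congr rfl fun m hm => ?_
    rw [if_pos (by simp only [Finset.mem_Icc] at hm; omega), Nat.add_sub_cancel]
  have h_from_above : ∑ i ∈ Finset.Icc 1 n,
      (if i + 1 ≤ n then X (i + 1) / N * ∑ j ∈ Finset.Icc 1 i, cB j (i + 1) * Ng j else 0) =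
        ∑ m ∈ Finset.Icc 1 n, down m := by
    have hg := sum_Icc_shift (n := n) (f := fun m => if m ≤ n then down m else 0)
      (by simp [down]) (by simp)
    simp only [Nat.add_sub_cancel, down] at hg
    rw [hg]
    exact sum_congr rfl fun m hm => if_pos (Finset.mem_Icc.1 hm).2
  have h_out : ∀ m ∈ Finset.Icc 1 n,
      X m / N * ∑ j ∈ (Finset.Icc 1 n).erase m, cB j m * Ng j = up m + down m := by
    intro m hm
    have hsplit : (Finset.Icc 1 n).erase m = Finset.Icc (m + 1) n ∪ Finset.Icc 1 (m - 1) := by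
      ext j; simp only [Finset.mem_erase, Finset.mem_Icc, Finset.mem_union] at hm ⊢; omega
    rw [hsplit, sum_union (Finset.disjoint_left.2 fun j hj hj' => by
      simp only [Finset.mem_Icc] at hj hj'; omega), mul_add]
  simp only [influenceTerm, sum_sub_distrib, sum_add_distrib, h_from_below, h_from_above,
    sum_congr rfl h_out, sub_self]

section Model

variable {n : ℕ} {I : Set ℝ} {G : ℝ → ℝ}

theorem NegPartControlled.influenceTerm {cB : ℕ → ℕ → ℝ} (hcB : ∀ j i, j ≠ i → 0 ≤ cB j i)
    {Ng X : ℕ → ℝ → ℝ} {N : ℝ → ℝ} {i : ℕ}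
    (hNg : ∀ j ∈ Finset.Icc 1 n, NegPartControlled I G (Ng j))
    (hX : ∀ j ∈ Finset.Icc 1 n, NegPartControlled I G (X j))
    (hN : NegPartControlled I G fun t => (N t)⁻¹) (hi : i ∈ Finset.Icc 1 n)
    (hXi : ∀ t ∈ I, X i t ≤ 0) :
    NegPartControlled I G fun t =>
      influenceTerm n cB (fun j => Ng j t) (N t) (fun j => X j t) i := by
  have hflow : ∀ m, ∀ Q ⊆ Finset.Icc 1 n, m ∉ Q →
      NegPartControlled I G fun t => ∑ j ∈ Q, cB j m * Ng j t := fun m Q hQ hmQ =>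
    .sum Q fun j hj => (hNg j (hQ hj)).const_mul (hcB j m (ne_of_mem_of_not_mem hj hmQ))
  have hi' := Finset.mem_Icc.1 hi
  have h_from_below : NegPartControlled I G fun t => if 2 ≤ i then
      X (i - 1) t / N t * ∑ j ∈ Finset.Icc i n, cB j (i - 1) * Ng j t else 0 := by
    by_cases h2 : 2 ≤ i
    · simp only [h2, if_true]
      exact ((hX _ (Finset.mem_Icc.2 (by omega))).div hN).mul
        (hflow _ _ (Icc_subset_Icc (by omega) le_rfl) (by simp; omega))
    · simpa [h2] using NegPartControlled.const le_rfl
  have h_from_above : NegPartControlled I G fun t => if i + 1 ≤ n then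
      X (i + 1) t / N t * ∑ j ∈ Finset.Icc 1 i, cB j (i + 1) * Ng j t else 0 := by
    by_cases h2 : i + 1 ≤ n
    · simp only [h2, if_true]
      exact ((hX _ (Finset.mem_Icc.2 (by omega))).div hN).mul
        (hflow _ _ (Icc_subset_Icc le_rfl (by omega)) (by simp))
    · simpa [h2] using NegPartControlled.const le_rfl
  have h_out := hflow i _ (erase_subset _ _) (notMem_erase _ _)
  refine ((h_from_below.add h_from_above).sub_mul_of_nonpos (h_out.mul hN).bounded (hX i hi)
    hXi).congr fun t _ => ?_
  simp only [_root_.influenceTerm]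
  ring

theorem NegPartControlled.forceOfInfection {βa βi βh θl : ℝ} {a : ℕ → ℝ} (hβa : 0 ≤ βa)
    (hβi : 0 ≤ βi) (hβh : 0 ≤ βh) (hθl : 0 ≤ θl) {S Ia Is Ih : ℕ → ℝ → ℝ} {N : ℝ → ℝ} {i : ℕ}
    (hS : NegPartControlled I G (S i))
    (hIa : ∀ j ∈ Finset.Icc 1 n, NegPartControlled I G (Ia j))
    (hIs : ∀ j ∈ Finset.Icc 1 n, NegPartControlled I G (Is j))
    (hIh : ∀ j ∈ Finset.Icc 1 n, NegPartControlled I G (Ih j))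
    (hN : NegPartControlled I G fun t => (N t)⁻¹)
    (hexp : ∀ j, NegPartControlled I G fun t =>
      Real.exp (-a j * (∑ k ∈ Finset.Icc 1 n, Ih k t) / N t)) :
    NegPartControlled I G fun t => forceOfInfection n βa βi βh θl a (N t)
      (fun j => S j t) (fun j => Ia j t) (fun j => Is j t) (fun j => Ih j t) i :=
  (((const hθl).mul (hexp i)).mul (hS.div hN)).mul <| .sum _ fun j hj => (hexp j).mul
    ((((hIa j hj).const_mul hβa).add ((hIs j hj).const_mul hβi)).add ((hIh j hj).const_mul hβh))

theorem forceOfInfection_eq_mul (n : ℕ) (βa βi βh θl : ℝ) (a : ℕ → ℝ) (N : ℝ)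
    (S Ia Is Ih : ℕ → ℝ) (i : ℕ) :
    forceOfInfection n βa βi βh θl a N S Ia Is Ih i =
      forceOfInfection n βa βi βh θl a N (fun _ => 1) Ia Is Ih i * S i := by
  simp only [forceOfInfection]
  ring

end Model

structure IsBehaviorSolution (n : ℕ) (βa βi βh σe σi γa γh δh ξ θl r q : ℝ) (a : ℕ → ℝ)
    (cB : ℕ → ℕ → ℝ) (T : ℝ) (S E Ia Is Ih R : ℕ → ℝ → ℝ) (Ntot : ℝ → ℝ) : Prop where
  total_eq : ∀ t, Ntot t =
    ∑ i ∈ Finset.Icc 1 n, (S i t + E i t + Ia i t + Is i t + Ih i t + R i t)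
  hasDerivAt_S : ∀ i ∈ Finset.Icc 1 n, ∀ t ∈ Set.Icc (0 : ℝ) T,
    HasDerivAt (S i)
      (ξ * R i t
        - forceOfInfection n βa βi βh θl a (Ntot t)
            (fun j => S j t) (fun j => Ia j t) (fun j => Is j t) (fun j => Ih j t) i
        + influenceTerm n cB
            (fun j => S j t + E j t + Ia j t + Is j t + Ih j t + R j t) (Ntot t)
            (fun j => S j t) i) t
  hasDerivAt_E : ∀ i ∈ Finset.Icc 1 n, ∀ t ∈ Set.Icc (0 : ℝ) T,
    HasDerivAt (E i)
      (forceOfInfection n βa βi βh θl a (Ntot t)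
          (fun j => S j t) (fun j => Ia j t) (fun j => Is j t) (fun j => Ih j t) i
        - σe * E i t
        + influenceTerm n cB
            (fun j => S j t + E j t + Ia j t + Is j t + Ih j t + R j t) (Ntot t)
            (fun j => E j t) i) t
  hasDerivAt_Ia : ∀ i ∈ Finset.Icc 1 n, ∀ t ∈ Set.Icc (0 : ℝ) T,
    HasDerivAt (Ia i)
      ((1 - r) * σe * E i t - γa * Ia i t
        + influenceTerm n cB
            (fun j => S j t + E j t + Ia j t + Is j t + Ih j t + R j t) (Ntot t)
            (fun j => Ia j t) i) t
  hasDerivAt_Is : ∀ i ∈ Finset.Icc 1 n, ∀ t ∈ Set.Icc (0 : ℝ) T,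
    HasDerivAt (Is i)
      (r * σe * E i t - σi * Is i t
        + influenceTerm n cB
            (fun j => S j t + E j t + Ia j t + Is j t + Ih j t + R j t) (Ntot t)
            (fun j => Is j t) i) t
  hasDerivAt_Ih : ∀ i ∈ Finset.Icc 1 n, ∀ t ∈ Set.Icc (0 : ℝ) T,
    HasDerivAt (Ih i)
      (q * σi * Is i t - (γh + δh) * Ih i t
        + influenceTerm n cB
            (fun j => S j t + E j t + Ia j t + Is j t + Ih j t + R j t) (Ntot t)
            (fun j => Ih j t) i) t
  hasDerivAt_R : ∀ i ∈ Finset.Icc 1 n, ∀ t ∈ Set.Icc (0 : ℝ) T,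
    HasDerivAt (R i)
      (γa * Ia i t + (1 - q) * σi * Is i t + γh * Ih i t - ξ * R i t
        + influenceTerm n cB
            (fun j => S j t + E j t + Ia j t + Is j t + Ih j t + R j t) (Ntot t)
            (fun j => R j t) i) t

namespace IsBehaviorSolution

variable {n : ℕ} {βa βi βh σe σi γa γh δh ξ θl r q : ℝ} {a : ℕ → ℝ} {cB : ℕ → ℕ → ℝ} {T : ℝ}
  {S E Ia Is Ih R : ℕ → ℝ → ℝ} {Ntot : ℝ → ℝ}

theorem hasDerivAt_total
    (h : IsBehaviorSolution n βa βi βh σe σi γa γh δh ξ θl r q a cB T S E Ia Is Ih R Ntot) :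
    ∀ t ∈ Set.Icc 0 T, HasDerivAt Ntot (-(δh * ∑ i ∈ Finset.Icc 1 n, Ih i t)) t := by
  intro t ht
  rw [funext h.total_eq]
  refine (HasDerivAt.fun_sum fun i hi => (((((h.hasDerivAt_S i hi t ht).add
    (h.hasDerivAt_E i hi t ht)).add (h.hasDerivAt_Ia i hi t ht)).add
    (h.hasDerivAt_Is i hi t ht)).add (h.hasDerivAt_Ih i hi t ht)).add
    (h.hasDerivAt_R i hi t ht)).congr_deriv ?_
  simp only [sum_add_distrib, sum_sub_distrib, ← mul_sum, sum_influenceTerm]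
  ring

theorem total_le_initial
    (h : IsBehaviorSolution n βa βi βh σe σi γa γh δh ξ θl r q a cB T S E Ia Is Ih R Ntot)
    (hδh : 0 ≤ δh) (hIh : ∀ i ∈ Finset.Icc 1 n, ∀ t ∈ Set.Icc 0 T, 0 ≤ Ih i t) :
    ∀ t ∈ Set.Icc 0 T, Ntot t ≤ Ntot 0 := by
  have hanti : AntitoneOn Ntot (Set.Icc 0 T) :=
    antitoneOn_of_hasDerivWithinAt_nonpos (convex_Icc 0 T)
      (fun t ht => (h.hasDerivAt_total t ht).continuousAt.continuousWithinAt)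
      (fun t ht => (h.hasDerivAt_total t (interior_subset ht)).hasDerivWithinAt)
      fun t ht => neg_nonpos.2 <| mul_nonneg hδh <|
        sum_nonneg fun i hi => hIh i hi t (interior_subset ht)
  exact fun t ht => hanti ⟨le_rfl, ht.1.trans ht.2⟩ ht ht.1

theorem differentiableAt
    (h : IsBehaviorSolution n βa βi βh σe σi γa γh δh ξ θl r q a cB T S E Ia Is Ih R Ntot) :
    ∀ c, ∀ i ∈ Finset.Icc 1 n, ∀ t ∈ Set.Icc 0 T,
      DifferentiableAt ℝ (![S, E, Ia, Is, Ih, R] c i) t := by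
  intro c i hi t ht
  fin_cases c
  exacts [(h.hasDerivAt_S i hi t ht).differentiableAt,
    (h.hasDerivAt_E i hi t ht).differentiableAt, (h.hasDerivAt_Ia i hi t ht).differentiableAt,
    (h.hasDerivAt_Is i hi t ht).differentiableAt, (h.hasDerivAt_Ih i hi t ht).differentiableAt,
    (h.hasDerivAt_R i hi t ht).differentiableAt]

theorem exists_hasDerivAt_negPartControlled
    (h : IsBehaviorSolution n βa βi βh σe σi γa γh δh ξ θl r q a cB T S E Ia Is Ih R Ntot)
    (hβa : 0 ≤ βa) (hβi : 0 ≤ βi) (hβh : 0 ≤ βh) (hσe : 0 ≤ σe) (hσi : 0 ≤ σi)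
    (hγa : 0 ≤ γa) (hγh : 0 ≤ γh) (hξ : 0 ≤ ξ) (hr : r ∈ Set.Icc (0 : ℝ) 1)
    (hq : q ∈ Set.Icc (0 : ℝ) 1) (hθl : 0 ≤ θl) (hcB : ∀ j i, j ≠ i → 0 ≤ cB j i)
    {I : Set ℝ} (hI : I ⊆ Set.Icc 0 T) {G : ℝ → ℝ}
    (hx : ∀ c, ∀ j ∈ Finset.Icc 1 n, NegPartControlled I G (![S, E, Ia, Is, Ih, R] c j))
    (hN : NegPartControlled I G fun t => (Ntot t)⁻¹)
    (hexp : ∀ j, NegPartControlled I G fun t =>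
      Real.exp (-a j * (∑ k ∈ Finset.Icc 1 n, Ih k t) / Ntot t))
    (c : Fin 6) {i : ℕ} (hi : i ∈ Finset.Icc 1 n)
    (hxi : ∀ t ∈ I, ![S, E, Ia, Is, Ih, R] c i t ≤ 0) :
    ∃ f : ℝ → ℝ, (∀ t ∈ I, HasDerivAt (![S, E, Ia, Is, Ih, R] c i) (f t) t) ∧
      NegPartControlled I G f := by
  have hS : ∀ j ∈ Finset.Icc 1 n, NegPartControlled I G (S j) := hx 0
  have hE : ∀ j ∈ Finset.Icc 1 n, NegPartControlled I G (E j) := hx 1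
  have hIa : ∀ j ∈ Finset.Icc 1 n, NegPartControlled I G (Ia j) := hx 2
  have hIs : ∀ j ∈ Finset.Icc 1 n, NegPartControlled I G (Is j) := hx 3
  have hIh : ∀ j ∈ Finset.Icc 1 n, NegPartControlled I G (Ih j) := hx 4
  have hR : ∀ j ∈ Finset.Icc 1 n, NegPartControlled I G (R j) := hx 5
  have hinfection : ∀ {S' : ℕ → ℝ → ℝ}, NegPartControlled I G (S' i) →
      NegPartControlled I G fun t => forceOfInfection n βa βi βh θl a (Ntot t)
        (fun j => S' j t) (fun j => Ia j t) (fun j => Is j t) (fun j => Ih j t) i :=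
    fun hS' => .forceOfInfection hβa hβi hβh hθl hS' hIa hIs hIh hN hexp
  have hinfluence : ∀ {X : ℕ → ℝ → ℝ}, (∀ j ∈ Finset.Icc 1 n, NegPartControlled I G (X j)) →
      (∀ t ∈ I, X i t ≤ 0) → NegPartControlled I G fun t => influenceTerm n cB
        (fun j => S j t + E j t + Ia j t + Is j t + Ih j t + R j t) (Ntot t) (fun j => X j t) i :=
    fun hX hXi => .influenceTerm hcB (fun j hj => (((((hS j hj).add (hE j hj)).add
      (hIa j hj)).add (hIs j hj)).add (hIh j hj)).add (hR j hj)) hX hN hi hXi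
  fin_cases c
  · refine ⟨_, fun t ht => h.hasDerivAt_S i hi t (hI ht), ?_⟩
    have hrate := hinfection (S' := fun _ _ => 1) (.const zero_le_one)
    refine ((((hR i hi).const_mul hξ).sub_mul_of_nonpos hrate.bounded (hS i hi) hxi).add
      (hinfluence hS hxi)).congr fun t _ => ?_
    rw [forceOfInfection_eq_mul (S := fun j => S j t)]
  · exact ⟨_, fun t ht => h.hasDerivAt_E i hi t (hI ht), ((hinfection (hS i hi)).sub_mul_of_nonpos
      ⟨|σe|, fun _ _ => le_rfl⟩ (hE i hi) hxi).add (hinfluence hE hxi)⟩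
  · exact ⟨_, fun t ht => h.hasDerivAt_Ia i hi t (hI ht),
      (((hE i hi).const_mul (mul_nonneg (sub_nonneg.2 hr.2) hσe)).sub_mul_of_nonpos
        ⟨|γa|, fun _ _ => le_rfl⟩ (hIa i hi) hxi).add (hinfluence hIa hxi)⟩
  · exact ⟨_, fun t ht => h.hasDerivAt_Is i hi t (hI ht),
      (((hE i hi).const_mul (mul_nonneg hr.1 hσe)).sub_mul_of_nonpos
        ⟨|σi|, fun _ _ => le_rfl⟩ (hIs i hi) hxi).add (hinfluence hIs hxi)⟩
  · exact ⟨_, fun t ht => h.hasDerivAt_Ih i hi t (hI ht),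
      (((hIs i hi).const_mul (mul_nonneg hq.1 hσi)).sub_mul_of_nonpos
        ⟨|γh + δh|, fun _ _ => le_rfl⟩ (hIh i hi) hxi).add (hinfluence hIh hxi)⟩
  · exact ⟨_, fun t ht => h.hasDerivAt_R i hi t (hI ht),
      (((((hIa i hi).const_mul hγa).add ((hIs i hi).const_mul
        (mul_nonneg (sub_nonneg.2 hq.2) hσi))).add ((hIh i hi).const_mul hγh)).sub_mul_of_nonpos
        ⟨|ξ|, fun _ _ => le_rfl⟩ (hR i hi) hxi).add (hinfluence hR hxi)⟩

theorem quasipositive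
    (h : IsBehaviorSolution n βa βi βh σe σi γa γh δh ξ θl r q a cB T S E Ia Is Ih R Ntot)
    (hβa : 0 ≤ βa) (hβi : 0 ≤ βi) (hβh : 0 ≤ βh) (hσe : 0 ≤ σe) (hσi : 0 ≤ σi)
    (hγa : 0 ≤ γa) (hγh : 0 ≤ γh) (hξ : 0 ≤ ξ) (hr : r ∈ Set.Icc (0 : ℝ) 1)
    (hq : q ∈ Set.Icc (0 : ℝ) 1) (hθl : 0 ≤ θl) (hcB : ∀ j i, j ≠ i → 0 ≤ cB j i) {G : ℝ → ℝ}
    (hx : ∀ c, ∀ j ∈ Finset.Icc 1 n,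
      NegPartControlled (Set.Icc 0 T) G (![S, E, Ia, Is, Ih, R] c j))
    (hN : NegPartControlled (Set.Icc 0 T) G fun t => (Ntot t)⁻¹)
    (hexp : ∀ j, NegPartControlled (Set.Icc 0 T) G fun t =>
      Real.exp (-a j * (∑ k ∈ Finset.Icc 1 n, Ih k t) / Ntot t))
    (c : Fin 6) {i : ℕ} (hi : i ∈ Finset.Icc 1 n) :
    ∃ L, ∀ t ∈ Set.Icc 0 T, ![S, E, Ia, Is, Ih, R] c i t ≤ 0 →
      -deriv (![S, E, Ia, Is, Ih, R] c i) t ≤ L * G t := by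
  have hJ : {t ∈ Set.Icc 0 T | ![S, E, Ia, Is, Ih, R] c i t ≤ 0} ⊆ Set.Icc 0 T := sep_subset _ _
  obtain ⟨f, hf, hfG⟩ := h.exists_hasDerivAt_negPartControlled hβa hβi hβh hσe hσi hγa hγh hξ
    hr hq hθl hcB hJ (fun c j hj => (hx c j hj).mono hJ) (hN.mono hJ) (fun j => (hexp j).mono hJ)
    c hi fun t ht => ht.2
  obtain ⟨L, hL⟩ := hfG.exists_neg_le
  exact ⟨L, fun t ht hxt => (hf t ⟨ht, hxt⟩).deriv ▸ hL t ⟨ht, hxt⟩⟩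

theorem nonneg
    (h : IsBehaviorSolution n βa βi βh σe σi γa γh δh ξ θl r q a cB T S E Ia Is Ih R Ntot)
    (hβa : 0 ≤ βa) (hβi : 0 ≤ βi) (hβh : 0 ≤ βh) (hσe : 0 ≤ σe) (hσi : 0 ≤ σi)
    (hγa : 0 ≤ γa) (hγh : 0 ≤ γh) (hξ : 0 ≤ ξ) (hr : r ∈ Set.Icc (0 : ℝ) 1)
    (hq : q ∈ Set.Icc (0 : ℝ) 1) (hθl : 0 ≤ θl) (hcB : ∀ j i, j ≠ i → 0 ≤ cB j i)
    (hNpos : ∀ t ∈ Set.Icc (0 : ℝ) T, 0 < Ntot t)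
    (hinit : ∀ i ∈ Finset.Icc 1 n,
      0 ≤ S i 0 ∧ 0 ≤ E i 0 ∧ 0 ≤ Ia i 0 ∧ 0 ≤ Is i 0 ∧ 0 ≤ Ih i 0 ∧ 0 ≤ R i 0) :
    ∀ i ∈ Finset.Icc 1 n, ∀ t ∈ Set.Icc (0 : ℝ) T,
      0 ≤ S i t ∧ 0 ≤ E i t ∧ 0 ≤ Ia i t ∧ 0 ≤ Is i t ∧ 0 ≤ Ih i t ∧ 0 ≤ R i t := by
  set x : Fin 6 → ℕ → ℝ → ℝ := ![S, E, Ia, Is, Ih, R]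
  set s := (univ : Finset (Fin 6)) ×ˢ Finset.Icc 1 n
  set G : ℝ → ℝ := fun t => ∑ p ∈ s, (x p.1 p.2 t)⁻
  have hderiv := h.differentiableAt
  have hcont : ∀ c, ∀ i ∈ Finset.Icc 1 n, ContinuousOn (x c i) (Set.Icc 0 T) :=
    fun c i hi t ht => (hderiv c i hi t ht).continuousAt.continuousWithinAt
  have hNcont : ContinuousOn Ntot (Set.Icc 0 T) :=
    fun t ht => (h.hasDerivAt_total t ht).continuousAt.continuousWithinAt
  have hx : ∀ c, ∀ j ∈ Finset.Icc 1 n, NegPartControlled (Set.Icc 0 T) G (x c j) :=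
    fun c j hj => .of_continuousOn isCompact_Icc (hcont c j hj) 1 fun t _ => by
      rw [one_mul]
      exact single_le_sum (f := fun p => (x p.1 p.2 t)⁻) (a := (c, j)) (fun _ _ => negPart_nonneg _)
        (Finset.mem_product.2 ⟨Finset.mem_univ c, hj⟩)
  have hN : NegPartControlled (Set.Icc 0 T) G fun t => (Ntot t)⁻¹ :=
    .of_continuousOn_nonneg isCompact_Icc (hNcont.inv₀ fun t ht => (hNpos t ht).ne')
      fun t ht => (inv_pos.2 (hNpos t ht)).le
  have hexp : ∀ j, NegPartControlled (Set.Icc 0 T) G fun t =>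
      Real.exp (-a j * (∑ k ∈ Finset.Icc 1 n, Ih k t) / Ntot t) := fun j =>
    .of_continuousOn_nonneg isCompact_Icc
      ((continuousOn_const.mul (continuousOn_finsetSum _ fun k hk => hcont 4 k hk)).div hNcont
        fun t ht => (hNpos t ht).ne').rexp fun _ _ => (Real.exp_pos _).le
  have key := nonneg_of_quasipositive s (x := fun p => x p.1 p.2)
    (fun p hp => hderiv p.1 p.2 (mem_product.1 hp).2)
    (fun p hp => by
      obtain ⟨h0S, h0E, h0Ia, h0Is, h0Ih, h0R⟩ := hinit p.2 (mem_product.1 hp).2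
      obtain ⟨c, i⟩ := p
      fin_cases c <;> assumption)
    fun p hp => h.quasipositive hβa hβi hβh hσe hσi hγa hγh hξ hr hq hθl hcB hx hN hexp p.1
      (mem_product.1 hp).2
  intro i hi t ht
  have := fun c => key (c, i) (mem_product.2 ⟨Finset.mem_univ c, hi⟩) t ht
  exact ⟨this 0, this 1, this 2, this 3, this 4, this 5⟩

end IsBehaviorSolution

theorem region_positively_invariant_general
    (n : ℕ)
    (βa βi βh σe σi γa γh δh ξ θl r q : ℝ) (a : ℕ → ℝ) (cB : ℕ → ℕ → ℝ)
    (hβa : 0 ≤ βa) (hβi : 0 ≤ βi) (hβh : 0 ≤ βh) (hσe : 0 ≤ σe) (hσi : 0 ≤ σi)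
    (hγa : 0 ≤ γa) (hγh : 0 ≤ γh) (hδh : 0 ≤ δh) (hξ : 0 ≤ ξ)
    (hr : r ∈ Set.Icc (0 : ℝ) 1) (hq : q ∈ Set.Icc (0 : ℝ) 1)
    (hθl : θl ∈ Set.Ioc (0 : ℝ) 1)
    (hcB : ∀ j i, j ≠ i → 0 ≤ cB j i)
    (T : ℝ)
    (S E Ia Is Ih R : ℕ → ℝ → ℝ)
    (Ntot : ℝ → ℝ)
    (hNtot : ∀ t, Ntot t =
      ∑ i ∈ Finset.Icc 1 n, (S i t + E i t + Ia i t + Is i t + Ih i t + R i t))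
    (hNpos : ∀ t ∈ Set.Icc (0 : ℝ) T, 0 < Ntot t)
    (hinit : ∀ i ∈ Finset.Icc 1 n,
      0 ≤ S i 0 ∧ 0 ≤ E i 0 ∧ 0 ≤ Ia i 0 ∧ 0 ≤ Is i 0 ∧ 0 ≤ Ih i 0 ∧ 0 ≤ R i 0)
    (hS : ∀ i ∈ Finset.Icc 1 n, ∀ t ∈ Set.Icc (0 : ℝ) T,
      HasDerivAt (S i)
        (ξ * R i t
          - forceOfInfection n βa βi βh θl a (Ntot t)
              (fun j => S j t) (fun j => Ia j t) (fun j => Is j t) (fun j => Ih j t) i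
          + influenceTerm n cB
              (fun j => S j t + E j t + Ia j t + Is j t + Ih j t + R j t) (Ntot t)
              (fun j => S j t) i) t)
    (hE : ∀ i ∈ Finset.Icc 1 n, ∀ t ∈ Set.Icc (0 : ℝ) T,
      HasDerivAt (E i)
        (forceOfInfection n βa βi βh θl a (Ntot t)
            (fun j => S j t) (fun j => Ia j t) (fun j => Is j t) (fun j => Ih j t) i
          - σe * E i t
          + influenceTerm n cB
              (fun j => S j t + E j t + Ia j t + Is j t + Ih j t + R j t) (Ntot t)
              (fun j => E j t) i) t)
    (hIa : ∀ i ∈ Finset.Icc 1 n, ∀ t ∈ Set.Icc (0 : ℝ) T,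
      HasDerivAt (Ia i)
        ((1 - r) * σe * E i t - γa * Ia i t
          + influenceTerm n cB
              (fun j => S j t + E j t + Ia j t + Is j t + Ih j t + R j t) (Ntot t)
              (fun j => Ia j t) i) t)
    (hIs : ∀ i ∈ Finset.Icc 1 n, ∀ t ∈ Set.Icc (0 : ℝ) T,
      HasDerivAt (Is i)
        (r * σe * E i t - σi * Is i t
          + influenceTerm n cB
              (fun j => S j t + E j t + Ia j t + Is j t + Ih j t + R j t) (Ntot t)
              (fun j => Is j t) i) t)
    (hIh : ∀ i ∈ Finset.Icc 1 n, ∀ t ∈ Set.Icc (0 : ℝ) T,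
      HasDerivAt (Ih i)
        (q * σi * Is i t - (γh + δh) * Ih i t
          + influenceTerm n cB
              (fun j => S j t + E j t + Ia j t + Is j t + Ih j t + R j t) (Ntot t)
              (fun j => Ih j t) i) t)
    (hR : ∀ i ∈ Finset.Icc 1 n, ∀ t ∈ Set.Icc (0 : ℝ) T,
      HasDerivAt (R i)
        (γa * Ia i t + (1 - q) * σi * Is i t + γh * Ih i t - ξ * R i t
          + influenceTerm n cB
              (fun j => S j t + E j t + Ia j t + Is j t + Ih j t + R j t) (Ntot t)
              (fun j => R j t) i) t) :
    (∀ i ∈ Finset.Icc 1 n, ∀ t ∈ Set.Icc (0 : ℝ) T,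
        0 ≤ S i t ∧ 0 ≤ E i t ∧ 0 ≤ Ia i t ∧ 0 ≤ Is i t ∧ 0 ≤ Ih i t ∧ 0 ≤ R i t)
      ∧ (∀ t ∈ Set.Icc (0 : ℝ) T, 0 < Ntot t ∧ Ntot t ≤ Ntot 0) := by
  have h : IsBehaviorSolution n βa βi βh σe σi γa γh δh ξ θl r q a cB T S E Ia Is Ih R Ntot :=
    ⟨hNtot, hS, hE, hIa, hIs, hIh, hR⟩
  have hnonneg := h.nonneg hβa hβi hβh hσe hσi hγa hγh hξ hr hq hθl.1.le hcB hNpos hinit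
  exact ⟨hnonneg, fun t ht => ⟨hNpos t ht,
    h.total_le_initial hδh (fun i hi t ht => (hnonneg i hi t ht).2.2.2.2.1) t ht⟩⟩

/-- **Theorem 1 (invariance of the region Ω).**
Suppose all parameters of the `n`-group behavior model are nonnegative (with
`r, q ∈ [0,1]` and `θ_l ∈ (0,1]`). If a solution of the `n`-group behavior model has
nonnegative initial values, with at least one `S_i(0) > 0`, and remains defined with
total population `N(t) > 0` on `[0,T]`, then every component
`S_i(t), E_i(t), Ia_i(t), Is_i(t), Ih_i(t), R_i(t)` is nonnegative for all `t ∈ [0,T]`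
and the total population satisfies `0 < N(t) ≤ N(0)`; i.e. the region `Ω` is positively
invariant for the flow of the model. -/
theorem region_positively_invariant
    (n : ℕ) (hn : 1 ≤ n)
    (βa βi βh σe σi γa γh δh ξ θl r q : ℝ) (a : ℕ → ℝ) (cB : ℕ → ℕ → ℝ)
    (hβa : 0 ≤ βa) (hβi : 0 ≤ βi) (hβh : 0 ≤ βh) (hσe : 0 ≤ σe) (hσi : 0 ≤ σi)
    (hγa : 0 ≤ γa) (hγh : 0 ≤ γh) (hδh : 0 ≤ δh) (hξ : 0 ≤ ξ)
    (hr : r ∈ Set.Icc (0 : ℝ) 1) (hq : q ∈ Set.Icc (0 : ℝ) 1)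
    (hθl : θl ∈ Set.Ioc (0 : ℝ) 1)
    (ha : ∀ i, 0 ≤ a i) (hcB : ∀ j i, j ≠ i → 0 ≤ cB j i)
    (T : ℝ) (hT : 0 ≤ T)
    (S E Ia Is Ih R : ℕ → ℝ → ℝ)
    (Ntot : ℝ → ℝ)
    (hNtot : ∀ t, Ntot t =
      ∑ i ∈ Finset.Icc 1 n, (S i t + E i t + Ia i t + Is i t + Ih i t + R i t))
    (hNpos : ∀ t ∈ Set.Icc (0 : ℝ) T, 0 < Ntot t)
    (hinit : ∀ i ∈ Finset.Icc 1 n,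
      0 ≤ S i 0 ∧ 0 ≤ E i 0 ∧ 0 ≤ Ia i 0 ∧ 0 ≤ Is i 0 ∧ 0 ≤ Ih i 0 ∧ 0 ≤ R i 0)
    (hSpos : ∃ i ∈ Finset.Icc 1 n, 0 < S i 0)
    (hS : ∀ i ∈ Finset.Icc 1 n, ∀ t ∈ Set.Icc (0 : ℝ) T,
      HasDerivAt (S i)
        (ξ * R i t
          - forceOfInfection n βa βi βh θl a (Ntot t)
              (fun j => S j t) (fun j => Ia j t) (fun j => Is j t) (fun j => Ih j t) i
          + influenceTerm n cB
              (fun j => S j t + E j t + Ia j t + Is j t + Ih j t + R j t) (Ntot t)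
              (fun j => S j t) i) t)
    (hE : ∀ i ∈ Finset.Icc 1 n, ∀ t ∈ Set.Icc (0 : ℝ) T,
      HasDerivAt (E i)
        (forceOfInfection n βa βi βh θl a (Ntot t)
            (fun j => S j t) (fun j => Ia j t) (fun j => Is j t) (fun j => Ih j t) i
          - σe * E i t
          + influenceTerm n cB
              (fun j => S j t + E j t + Ia j t + Is j t + Ih j t + R j t) (Ntot t)
              (fun j => E j t) i) t)
    (hIa : ∀ i ∈ Finset.Icc 1 n, ∀ t ∈ Set.Icc (0 : ℝ) T,
      HasDerivAt (Ia i)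
        ((1 - r) * σe * E i t - γa * Ia i t
          + influenceTerm n cB
              (fun j => S j t + E j t + Ia j t + Is j t + Ih j t + R j t) (Ntot t)
              (fun j => Ia j t) i) t)
    (hIs : ∀ i ∈ Finset.Icc 1 n, ∀ t ∈ Set.Icc (0 : ℝ) T,
      HasDerivAt (Is i)
        (r * σe * E i t - σi * Is i t
          + influenceTerm n cB
              (fun j => S j t + E j t + Ia j t + Is j t + Ih j t + R j t) (Ntot t)
              (fun j => Is j t) i) t)
    (hIh : ∀ i ∈ Finset.Icc 1 n, ∀ t ∈ Set.Icc (0 : ℝ) T,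
      HasDerivAt (Ih i)
        (q * σi * Is i t - (γh + δh) * Ih i t
          + influenceTerm n cB
              (fun j => S j t + E j t + Ia j t + Is j t + Ih j t + R j t) (Ntot t)
              (fun j => Ih j t) i) t)
    (hR : ∀ i ∈ Finset.Icc 1 n, ∀ t ∈ Set.Icc (0 : ℝ) T,
      HasDerivAt (R i)
        (γa * Ia i t + (1 - q) * σi * Is i t + γh * Ih i t - ξ * R i t
          + influenceTerm n cB
              (fun j => S j t + E j t + Ia j t + Is j t + Ih j t + R j t) (Ntot t)
              (fun j => R j t) i) t) :
    (∀ i ∈ Finset.Icc 1 n, ∀ t ∈ Set.Icc (0 : ℝ) T,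
        0 ≤ S i t ∧ 0 ≤ E i t ∧ 0 ≤ Ia i t ∧ 0 ≤ Is i t ∧ 0 ≤ Ih i t ∧ 0 ≤ R i t)
      ∧ (∀ t ∈ Set.Icc (0 : ℝ) T, 0 < Ntot t ∧ Ntot t ≤ Ntot 0) :=
  region_positively_invariant_general n βa βi βh σe σi γa γh δh ξ θl r q a cB hβa hβi hβh hσe hσi
    hγa hγh hδh hξ hr hq hθl hcB T S E Ia Is Ih R Ntot hNtot hNpos hinit hS hE hIa hIs hIh hR
end

section
/- (Existence of disease-free equilibria) For every p > 0: the point with S_1 = p and all other eleven components equal to 0 (the G1DFE), and the point with S_2 = p and all other components 0 (the G2DFE), are equilibria of the 2-group behavior model, i.e., the vector field F vanishes there, for all admissible parameter values. Moreover, for 0 < k < 1, the coexistence point with S_1 = kp, S_2 = (1−k)p, and all other components 0 (the G3DFE) is an equilibrium of the 2-group behavior model if and only if c12 = c21. -/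
/-- The vector field `F` of the 2-group behavior model on `ℝ^12`, with state ordering
`x = (S1, S2, E1, E2, Ia1, Ia2, Is1, Is2, Ih1, Ih2, R1, R2)`. -/
noncomputable def twoGroupField (βa βi βh σe σi γa γh δh ξ θl r q a1 a2 c12 c21 : ℝ)
    (x : Fin 12 → ℝ) : Fin 12 → ℝ :=
  let S1 := x 0; let S2 := x 1; let E1 := x 2; let E2 := x 3
  let Ia1 := x 4; let Ia2 := x 5; let Is1 := x 6; let Is2 := x 7
  let Ih1 := x 8; let Ih2 := x 9; let R1 := x 10; let R2 := x 11
  let N := S1 + S2 + E1 + E2 + Ia1 + Ia2 + Is1 + Is2 + Ih1 + Ih2 + R1 + R2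
  let N1 := S1 + E1 + Ia1 + Is1 + Ih1 + R1
  let N2 := S2 + E2 + Ia2 + Is2 + Ih2 + R2
  let cA1 := Real.exp (-a1 * (Ih1 + Ih2) / N)
  let cA2 := Real.exp (-a2 * (Ih1 + Ih2) / N)
  let Λ := cA1 * (βa * Ia1 + βi * Is1 + βh * Ih1) + cA2 * (βa * Ia2 + βi * Is2 + βh * Ih2)
  let lam1 := θl * cA1 * (S1 / N) * Λ
  let lam2 := θl * cA2 * (S2 / N) * Λ
  ![ξ * R1 - lam1 + (c12 * S2 * N1 / N - c21 * S1 * N2 / N),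
    ξ * R2 - lam2 + (c21 * S1 * N2 / N - c12 * S2 * N1 / N),
    lam1 - σe * E1 + (c12 * E2 * N1 / N - c21 * E1 * N2 / N),
    lam2 - σe * E2 + (c21 * E1 * N2 / N - c12 * E2 * N1 / N),
    (1 - r) * σe * E1 - γa * Ia1 + (c12 * Ia2 * N1 / N - c21 * Ia1 * N2 / N),
    (1 - r) * σe * E2 - γa * Ia2 + (c21 * Ia1 * N2 / N - c12 * Ia2 * N1 / N),
    r * σe * E1 - σi * Is1 + (c12 * Is2 * N1 / N - c21 * Is1 * N2 / N),
    r * σe * E2 - σi * Is2 + (c21 * Is1 * N2 / N - c12 * Is2 * N1 / N),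
    q * σi * Is1 - (γh + δh) * Ih1 + (c12 * Ih2 * N1 / N - c21 * Ih1 * N2 / N),
    q * σi * Is2 - (γh + δh) * Ih2 + (c21 * Ih1 * N2 / N - c12 * Ih2 * N1 / N),
    γa * Ia1 + (1 - q) * σi * Is1 + γh * Ih1 - ξ * R1 + (c12 * R2 * N1 / N - c21 * R1 * N2 / N),
    γa * Ia2 + (1 - q) * σi * Is2 + γh * Ih2 - ξ * R2 + (c21 * R1 * N2 / N - c12 * R2 * N1 / N)]

/-! At a disease-free state every infection term carries a factor `Ia`, `Is` or `Ih` and so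
vanishes; only the exchange of susceptibles survives, with net flux
`(c12 - c21) S1 S2 / (S1 + S2)` into group 1, which, for `S1 + S2 ≠ 0`, vanishes iff `S1 S2 = 0` or `c12 = c21`. -/

theorem twoGroupField_diseaseFree (βa βi βh σe σi γa γh δh ξ θl r q a1 a2 c12 c21 S1 S2 : ℝ) :
    twoGroupField βa βi βh σe σi γa γh δh ξ θl r q a1 a2 c12 c21
        ![S1, S2, 0, 0, 0, 0, 0, 0, 0, 0, 0, 0] =
      ![(c12 - c21) * S1 * S2 / (S1 + S2), -((c12 - c21) * S1 * S2 / (S1 + S2)),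
        0, 0, 0, 0, 0, 0, 0, 0, 0, 0] := by
  funext i
  fin_cases i <;>
    simp only [twoGroupField, Fin.isValue, Matrix.cons_val, Matrix.cons_val_zero,
      Matrix.cons_val_one, Fin.zero_eta, Fin.mk_one, Fin.reduceFinMk, Nat.succ_eq_add_one,
      Nat.reduceAdd, mul_zero, zero_mul, add_zero, zero_add, zero_div, Real.exp_zero, mul_one,
      sub_self] <;>
    ring

theorem twoGroupField_diseaseFree_eq_zero_iff
    (βa βi βh σe σi γa γh δh ξ θl r q a1 a2 c12 c21 S1 S2 : ℝ) :
    twoGroupField βa βi βh σe σi γa γh δh ξ θl r q a1 a2 c12 c21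
        ![S1, S2, 0, 0, 0, 0, 0, 0, 0, 0, 0, 0] = 0 ↔
      (c12 - c21) * S1 * S2 / (S1 + S2) = 0 := by
  rw [twoGroupField_diseaseFree]
  constructor
  · intro h
    simpa using congrFun h 0
  · intro h
    funext i
    fin_cases i <;> simp [h]

theorem disease_free_equilibria_exist_general
    (βa βi βh σe σi γa γh δh ξ θl r q a1 a2 c12 c21 : ℝ)
    (p : ℝ) (hp : 0 < p) :
    twoGroupField βa βi βh σe σi γa γh δh ξ θl r q a1 a2 c12 c21
        ![p, 0, 0, 0, 0, 0, 0, 0, 0, 0, 0, 0] = 0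
      ∧ twoGroupField βa βi βh σe σi γa γh δh ξ θl r q a1 a2 c12 c21
          ![0, p, 0, 0, 0, 0, 0, 0, 0, 0, 0, 0] = 0
      ∧ ∀ k : ℝ, 0 < k → k < 1 →
          (twoGroupField βa βi βh σe σi γa γh δh ξ θl r q a1 a2 c12 c21
              ![k * p, (1 - k) * p, 0, 0, 0, 0, 0, 0, 0, 0, 0, 0] = 0 ↔ c12 = c21) := by
  refine ⟨?_, ?_, fun k hk0 hk1 => ?_⟩
  · simp [twoGroupField_diseaseFree_eq_zero_iff]
  · simp [twoGroupField_diseaseFree_eq_zero_iff]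
  · have hsum : k * p + (1 - k) * p = p := by ring
    have hk : 1 - k ≠ 0 := (sub_pos.mpr hk1).ne'
    rw [twoGroupField_diseaseFree_eq_zero_iff, hsum]
    simp [hp.ne', hk0.ne', hk, sub_eq_zero]

/-- **Existence of disease-free equilibria of the 2-group behavior model.**
For every `p > 0`, the Group 1-only point (`S1 = p`, everything else `0`, the G1DFE) and
the Group 2-only point (`S2 = p`, everything else `0`, the G2DFE) are equilibria of the
2-group behavior model for all admissible parameter values; and for `0 < k < 1` the
coexistence point (`S1 = k p`, `S2 = (1−k) p`, everything else `0`, the G3DFE) is an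
equilibrium if and only if `c12 = c21`. -/
theorem disease_free_equilibria_exist
    (βa βi βh σe σi γa γh δh ξ θl r q a1 a2 c12 c21 : ℝ)
    (hβa : 0 < βa) (hβi : 0 < βi) (hβh : 0 < βh) (hσe : 0 < σe) (hσi : 0 < σi)
    (hγa : 0 < γa) (hγh : 0 < γh) (hδh : 0 < δh) (hξ : 0 < ξ)
    (hr : r ∈ Set.Ioo (0 : ℝ) 1) (hq : q ∈ Set.Ioo (0 : ℝ) 1)
    (hθl : θl ∈ Set.Ioc (0 : ℝ) 1) (ha1 : 0 ≤ a1) (ha2 : 0 ≤ a2)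
    (hc12 : 0 < c12) (hc21 : 0 < c21)
    (p : ℝ) (hp : 0 < p) :
    twoGroupField βa βi βh σe σi γa γh δh ξ θl r q a1 a2 c12 c21
        ![p, 0, 0, 0, 0, 0, 0, 0, 0, 0, 0, 0] = 0
      ∧ twoGroupField βa βi βh σe σi γa γh δh ξ θl r q a1 a2 c12 c21
          ![0, p, 0, 0, 0, 0, 0, 0, 0, 0, 0, 0] = 0
      ∧ ∀ k : ℝ, 0 < k → k < 1 →
          (twoGroupField βa βi βh σe σi γa γh δh ξ θl r q a1 a2 c12 c21
              ![k * p, (1 - k) * p, 0, 0, 0, 0, 0, 0, 0, 0, 0, 0] = 0 ↔ c12 = c21) :=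
  disease_free_equilibria_exist_general βa βi βh σe σi γa γh δh ξ θl r q a1 a2 c12 c21 p hp
end

section
/- (Proposition 3.1, Metzler block criterion) Let M be a Metzler matrix in block form M = [[A, B], [C, D]] where A and D are square. If A is invertible (which holds in particular whenever A is Metzler-stable), then M is Metzler-stable if and only if both A and the Schur complement D − C·A⁻¹·B are Metzler-stable. -/
/-- A real square matrix is *Metzler* if all of its off-diagonal entries are
nonnegative. -/
def IsMetzler {n : Type*} [Fintype n] [DecidableEq n] (M : Matrix n n ℝ) : Prop :=
  ∀ i j, i ≠ j → 0 ≤ M i j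

/-- A real square matrix is *Hurwitz-stable* if every root over `ℂ` of its characteristic
polynomial has strictly negative real part. -/
def IsHurwitzStable {n : Type*} [Fintype n] [DecidableEq n] (M : Matrix n n ℝ) : Prop :=
  ∀ z : ℂ, (M.charpoly.map (algebraMap ℝ ℂ)).IsRoot z → z.re < 0

/-- A real square matrix is *Metzler-stable* if it is both Metzler and Hurwitz-stable. -/
def IsMetzlerStable {n : Type*} [Fintype n] [DecidableEq n] (M : Matrix n n ℝ) : Prop :=
  IsMetzler M ∧ IsHurwitzStable M

/-!
A Metzler matrix `A` is Hurwitz-stable iff `A v < 0` for some positive vector `v`. If such a `v`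
exists, Gershgorin's theorem applied to `diag(v)⁻¹ A diag(v)`, whose rows have negative sums,
puts the spectrum in the open left half-plane. Conversely, write `A = s (X - 1)` with `s` so large
that `X ≥ 0` and the spectrum of `X` lies in the open unit disc; then `X ^ k → 0` by Gelfand's
formula, so `-A⁻¹ = s⁻¹ ∑ X ^ k ≥ 0` and `v = -A⁻¹ 𝟙` works.

Since `-A⁻¹ ≥ 0`, the Schur complement `S = D - C A⁻¹ B` is Metzler, and with `x = -A⁻¹ B w`
the block matrix sends `(x, w)` to `(0, S w)`. This transfers positive test vectors: from `M` to
`A` and `S` by comparing `x ≤ v₁`, and back from `S` by perturbing `x` to `x + ε u`, `A u < 0`.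
-/

open Matrix Filter Topology Finset

theorem tendsto_pow_atTop_nhds_zero_of_spectralRadius_lt_one {𝔸 : Type*} [NormedRing 𝔸]
    [NormedAlgebra ℂ 𝔸] [CompleteSpace 𝔸] {a : 𝔸} (ha : spectralRadius ℂ a < 1) :
    Tendsto (a ^ ·) atTop (𝓝 0) := by
  obtain ⟨c, hρc, hc1⟩ := ENNReal.lt_iff_exists_nnreal_btwn.1 ha
  have hbound : ∀ᶠ k : ℕ in atTop, ‖a ^ k‖ ≤ (c : ℝ) ^ k := by
    filter_upwards [(spectrum.pow_nnnorm_pow_one_div_tendsto_nhds_spectralRadius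
      a).eventually_lt_const hρc, eventually_gt_atTop 0] with k hk hk0
    rw [one_div, ENNReal.rpow_inv_lt_iff (by positivity), ENNReal.rpow_natCast,
      ← ENNReal.coe_pow, ENNReal.coe_lt_coe, ← NNReal.coe_lt_coe, coe_nnnorm,
      NNReal.coe_pow] at hk
    exact hk.le
  exact squeeze_zero_norm' hbound
    (tendsto_pow_atTop_nhds_zero_of_lt_one c.coe_nonneg (mod_cast hc1))

theorem spectrum.mem_one_add_smul_iff {𝕜 𝔸 : Type*} [Field 𝕜] [Ring 𝔸] [Algebra 𝕜 𝔸]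
    {a : 𝔸} {t : 𝕜} (ht : t ≠ 0) {z : 𝕜} :
    z ∈ spectrum 𝕜 (1 + t • a) ↔ (z - 1) / t ∈ spectrum 𝕜 a := by
  conv_lhs => rw [← sub_add_cancel z 1, ← map_one (algebraMap 𝕜 𝔸), spectrum.add_mem_add_iff,
    ← mul_div_cancel₀ (z - 1) ht]
  exact spectrum.smul_mem_smul_iff (r := Units.mk0 t ht)

theorem Complex.eventually_norm_one_add_div_lt_one {z : ℂ} (hz : z.re < 0) :
    ∀ᶠ s : ℝ in atTop, ‖1 + z / s‖ < 1 := by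
  filter_upwards [eventually_gt_atTop (‖z‖ ^ 2 / (-(2 * z.re))), eventually_gt_atTop 0]
    with s hs hs0
  have hsq : ‖(s : ℂ) + z‖ ^ 2 < s ^ 2 := by
    rw [div_lt_iff₀ (by linarith)] at hs
    rw [Complex.sq_norm, Complex.normSq_apply] at hs ⊢
    simp only [Complex.add_re, Complex.add_im, Complex.ofReal_re, Complex.ofReal_im]
    nlinarith
  have hs0' : (s : ℂ) ≠ 0 := mod_cast hs0.ne'
  rw [show 1 + z / s = (s + z) / s by rw [add_div, div_self hs0'], norm_div,
    Complex.norm_real, Real.norm_of_nonneg hs0.le, div_lt_one hs0]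
  exact lt_of_pow_lt_pow_left₀ 2 hs0.le hsq

theorem exists_pos_forall_add_mul_neg {ι : Type*} [Finite ι] {a : ι → ℝ}
    (ha : ∀ i, a i < 0) (b : ι → ℝ) : ∃ ε > 0, ∀ i, a i + ε * b i < 0 := by
  have hnear : ∀ i, ∀ᶠ ε in 𝓝 (0 : ℝ), a i + ε * b i < 0 := fun i => by
    have hcont : Tendsto (fun ε => a i + ε * b i) (𝓝 0) (𝓝 (a i)) :=
      (continuous_const.add (continuous_id.mul continuous_const)).tendsto' 0 (a i) (by simp)
    exact hcont.eventually (gt_mem_nhds (ha i))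
  obtain ⟨ε, hε, hεpos⟩ :=
    (eventually_nhdsWithin_of_eventually_nhds (eventually_all.2 hnear)).and
      (self_mem_nhdsWithin (s := Set.Ioi 0)) |>.exists
  exact ⟨ε, hεpos, hε⟩

namespace Matrix

theorem mulVec_mono {l m : Type*} [Fintype m] {P : Matrix l m ℝ} (hP : ∀ i j, 0 ≤ P i j)
    {x y : m → ℝ} (hxy : x ≤ y) : P *ᵥ x ≤ P *ᵥ y := fun i =>
  sum_le_sum fun j _ => mul_le_mul_of_nonneg_left (hxy j) (hP i j)

theorem mulVec_nonneg {l m : Type*} [Fintype m] {P : Matrix l m ℝ} (hP : ∀ i j, 0 ≤ P i j)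
    {x : m → ℝ} (hx : 0 ≤ x) : 0 ≤ P *ᵥ x := by
  simpa using mulVec_mono hP hx

theorem mul_apply_nonneg {l m o : Type*} [Fintype m] {P : Matrix l m ℝ} {Q : Matrix m o ℝ}
    (hP : ∀ i j, 0 ≤ P i j) (hQ : ∀ i j, 0 ≤ Q i j) (i : l) (j : o) : 0 ≤ (P * Q) i j :=
  sum_nonneg fun k _ => mul_nonneg (hP i k) (hQ k j)

theorem schur_complement_mulVec {l m R : Type*} [Fintype l] [Fintype m] [DecidableEq l]
    [CommRing R] (A : Matrix l l R) (B : Matrix l m R) (C : Matrix m l R) (D : Matrix m m R)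
    (w : m → R) : (D - C * A⁻¹ * B) *ᵥ w = C *ᵥ (-(A⁻¹ *ᵥ B *ᵥ w)) + D *ᵥ w := by
  rw [sub_mulVec, ← mulVec_mulVec, ← mulVec_mulVec, mulVec_neg]
  abel

variable {n : Type*} [Fintype n] [DecidableEq n]

theorem apply_nonneg_of_mul_one_sub_eq_one {X Y : Matrix n n ℝ} (hX : ∀ i j, 0 ≤ X i j)
    (hpow : Tendsto (X ^ ·) atTop (𝓝 0)) (hY : Y * (1 - X) = 1) (i j : n) : 0 ≤ Y i j := by
  have hsum : ∀ K, Y * (1 - X ^ K) = ∑ k ∈ range K, X ^ k := fun K => by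
    rw [← mul_neg_geom_sum, ← Matrix.mul_assoc, hY, Matrix.one_mul]
  have hlim : Tendsto (fun K => Y * (1 - X ^ K)) atTop (𝓝 Y) := by
    simpa using (tendsto_const_nhds (x := Y)).mul ((tendsto_const_nhds (x := 1)).sub hpow)
  refine ge_of_tendsto (tendsto_pi_nhds.1 (tendsto_pi_nhds.1 hlim i) j)
    (Eventually.of_forall fun K => ?_)
  rw [hsum, sum_apply]
  exact sum_nonneg fun k _ => pow_apply_nonneg hX k i j

theorem tendsto_pow_atTop_nhds_zero_of_spectrum_subset_ball {X : Matrix n n ℝ}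
    (hX : spectrum ℂ (X.map (algebraMap ℝ ℂ)) ⊆ Metric.ball 0 1) :
    Tendsto (X ^ ·) atTop (𝓝 0) := by
  rcases isEmpty_or_nonempty n with _ | _
  · exact tendsto_const_nhds.congr fun _ => Subsingleton.elim _ _
  -- any submultiplicative norm serves for Gelfand's formula; this one induces the entrywise
  -- topology, which is what `tendsto_pi_nhds` reads below
  let _ := Matrix.linftyOpNormedRing (n := n) (α := ℂ)
  let _ := Matrix.linftyOpNormedAlgebra (R := ℂ) (n := n) (α := ℂ)
  have : CompleteSpace (Matrix n n ℂ) := FiniteDimensional.complete ℂ _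
  have hρ : spectralRadius ℂ (X.map (algebraMap ℝ ℂ)) < 1 := by
    exact_mod_cast spectrum.spectralRadius_lt_of_forall_lt _ fun z hz => by
      simpa [← NNReal.coe_lt_coe] using hX hz
  have hmap : ∀ k, X.map (algebraMap ℝ ℂ) ^ k = (X ^ k).map (algebraMap ℝ ℂ) := fun k =>
    (map_pow (algebraMap ℝ ℂ).mapMatrix X k).symm
  have h := tendsto_pow_atTop_nhds_zero_of_spectralRadius_lt_one hρ
  refine tendsto_pi_nhds.2 fun i => tendsto_pi_nhds.2 fun j => ?_
  have hij := (Complex.continuous_re.tendsto _).comp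
    (tendsto_pi_nhds.1 (tendsto_pi_nhds.1 h i) j)
  simp only [Function.comp_def, hmap] at hij
  simpa only [map_apply, Complex.coe_algebraMap, Complex.ofReal_re, zero_apply,
    Complex.zero_re] using hij

end Matrix

section Metzler

variable {n : Type*} [Fintype n] [DecidableEq n]

theorem isHurwitzStable_iff_forall_mem_spectrum {A : Matrix n n ℝ} :
    IsHurwitzStable A ↔ ∀ z ∈ spectrum ℂ (A.map (algebraMap ℝ ℂ)), z.re < 0 := by
  simp only [IsHurwitzStable, Matrix.mem_spectrum_iff_isRoot_charpoly, Matrix.charpoly_map]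

theorem IsHurwitzStable.isUnit_det {A : Matrix n n ℝ} (hA : IsHurwitzStable A) :
    IsUnit A.det := by
  have h0 : (0 : ℂ) ∉ spectrum ℂ (A.map (algebraMap ℝ ℂ)) := fun h =>
    lt_irrefl _ (isHurwitzStable_iff_forall_mem_spectrum.1 hA 0 h)
  rwa [spectrum.zero_notMem_iff, Matrix.isUnit_iff_isUnit_det, ← RingHom.mapMatrix_apply,
    ← RingHom.map_det, isUnit_map_iff] at h0

theorem IsMetzler.add_of_nonneg {A N : Matrix n n ℝ} (hA : IsMetzler A)
    (hN : ∀ i j, 0 ≤ N i j) : IsMetzler (A + N) := fun i j hij =>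
  add_nonneg (hA i j hij) (hN i j)

theorem IsMetzler.isHurwitzStable_of_row_sum_neg {A : Matrix n n ℝ} (hA : IsMetzler A)
    (hrow : ∀ i, ∑ j, A i j < 0) : IsHurwitzStable A := by
  rw [isHurwitzStable_iff_forall_mem_spectrum]
  intro z hz
  rw [← Matrix.spectrum_toLin', ← Module.End.hasEigenvalue_iff_mem_spectrum] at hz
  obtain ⟨k, hk⟩ := eigenvalue_mem_ball hz
  have hoff :
      ∑ j ∈ univ.erase k, ‖A.map (algebraMap ℝ ℂ) k j‖ = ∑ j ∈ univ.erase k, A k j :=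
    sum_congr rfl fun j hj => by
      simp [abs_of_nonneg (hA k j (ne_of_mem_erase hj).symm)]
  have hsplit := add_sum_erase univ (A k ·) (mem_univ k)
  rw [Metric.mem_closedBall, dist_eq_norm, hoff, map_apply, Complex.coe_algebraMap] at hk
  have hre := Complex.re_le_norm (z - A k k)
  rw [Complex.sub_re, Complex.ofReal_re] at hre
  linarith [hrow k]

theorem IsMetzler.isHurwitzStable_of_mulVec_neg {A : Matrix n n ℝ} (hA : IsMetzler A)
    {v : n → ℝ} (hv : ∀ i, 0 < v i) (hAv : ∀ i, (A *ᵥ v) i < 0) : IsHurwitzStable A := by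
  set W := diagonal v⁻¹ * A * diagonal v
  have hW : ∀ i j, W i j = (v i)⁻¹ * A i j * v j := fun i j => by
    simp [W, diagonal_mul, mul_diagonal]
  have hcharpoly : W.charpoly = A.charpoly := by
    rw [charpoly_mul_comm, ← Matrix.mul_assoc, diagonal_mul_diagonal]
    simp [mul_inv_cancel₀ (hv _).ne']
  have hWM : IsMetzler W := fun i j hij => by
    rw [hW]
    exact mul_nonneg (mul_nonneg (inv_nonneg.2 (hv i).le) (hA i j hij)) (hv j).le
  have hWrow : ∀ i, ∑ j, W i j < 0 := fun i => by
    simp_rw [hW, mul_assoc, ← mul_sum]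
    exact mul_neg_of_pos_of_neg (inv_pos.2 (hv i)) (hAv i)
  have := hWM.isHurwitzStable_of_row_sum_neg hWrow
  rwa [IsHurwitzStable, hcharpoly] at this

theorem IsMetzler.inv_apply_nonpos {A : Matrix n n ℝ} (hA : IsMetzler A)
    (hH : IsHurwitzStable A) (i j : n) : A⁻¹ i j ≤ 0 := by
  set Ac := A.map (algebraMap ℝ ℂ)
  have hσ := isHurwitzStable_iff_forall_mem_spectrum.1 hH
  obtain ⟨s, hs0, hdiag, hσs⟩ : ∃ s : ℝ, 0 < s ∧ (∀ k, -A k k ≤ s) ∧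
      ∀ z ∈ spectrum ℂ Ac, ‖1 + z / s‖ < 1 :=
    ((eventually_gt_atTop 0).and ((eventually_all.2 fun k => eventually_ge_atTop (-A k k)).and
      ((Matrix.finite_spectrum Ac).eventually_all.2 fun z hz =>
        Complex.eventually_norm_one_add_div_lt_one (hσ z hz)))).exists
  set X := 1 + s⁻¹ • A
  have hX : ∀ k l, 0 ≤ X k l := fun k l => by
    rcases eq_or_ne k l with rfl | hkl
    · have : -A k k * s⁻¹ ≤ 1 := by
        rw [← div_eq_mul_inv, div_le_one hs0]; exact hdiag k
      simp only [X, Matrix.add_apply, one_apply_eq, Matrix.smul_apply, smul_eq_mul]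
      linarith
    · simp only [X, Matrix.add_apply, one_apply_ne hkl, Matrix.smul_apply, smul_eq_mul,
        zero_add]
      exact mul_nonneg (inv_nonneg.2 hs0.le) (hA k l hkl)
  have hXc : X.map (algebraMap ℝ ℂ) = 1 + ((s : ℂ)⁻¹) • Ac := by
    ext k l
    rcases eq_or_ne k l with rfl | hkl <;> simp [X, Ac, one_apply, *]
  have hball : spectrum ℂ (X.map (algebraMap ℝ ℂ)) ⊆ Metric.ball 0 1 := fun z hz => by
    have hs : (s : ℂ) ≠ 0 := mod_cast hs0.ne'
    rw [hXc, spectrum.mem_one_add_smul_iff (inv_ne_zero hs)] at hz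
    simpa [mul_div_cancel_right₀ _ hs] using hσs _ hz
  have hY : (-s • A⁻¹) * (1 - X) = 1 := by
    rw [show 1 - X = -s⁻¹ • A by simp [X], smul_mul_smul_comm, neg_mul_neg,
      mul_inv_cancel₀ hs0.ne', one_smul, nonsing_inv_mul A hH.isUnit_det]
  have hYij := apply_nonneg_of_mul_one_sub_eq_one hX
    (tendsto_pow_atTop_nhds_zero_of_spectrum_subset_ball hball) hY i j
  rw [Matrix.smul_apply, smul_eq_mul, neg_mul] at hYij
  exact nonpos_of_mul_nonpos_right (neg_nonneg.1 hYij) hs0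

theorem IsMetzler.exists_pos_mulVec_neg {A : Matrix n n ℝ} (hA : IsMetzler A)
    (hH : IsHurwitzStable A) : ∃ v : n → ℝ, (∀ i, 0 < v i) ∧ ∀ i, (A *ᵥ v) i < 0 := by
  refine ⟨-A⁻¹ *ᵥ fun _ => 1, fun i => ?_, fun i => ?_⟩
  · have hrow : ∀ j, 0 ≤ (-A⁻¹) i j := fun j => neg_nonneg.2 (hA.inv_apply_nonpos hH i j)
    have hv : (-A⁻¹ *ᵥ fun _ => 1) i = ∑ j, (-A⁻¹) i j := by simp [mulVec, dotProduct]
    -- an invertible matrix has no zero row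
    refine hv ▸ (sum_nonneg fun j _ => hrow j).lt_of_ne fun hzero => ?_
    have hzero' : ∀ j, A⁻¹ i j = 0 := fun j => by
      simpa using (sum_eq_zero_iff_of_nonneg fun j _ => hrow j).1 hzero.symm j (mem_univ j)
    have hii := congr_fun (congr_fun (nonsing_inv_mul A hH.isUnit_det) i) i
    simp [mul_apply, hzero'] at hii
  · rw [neg_mulVec, mulVec_neg, mulVec_mulVec, mul_nonsing_inv A hH.isUnit_det, one_mulVec]
    simp

end Metzler

section Blocks

variable {l m : Type*} [Fintype l] [Fintype m] [DecidableEq l]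
  {A : Matrix l l ℝ} {B : Matrix l m ℝ} {C : Matrix m l ℝ} {D : Matrix m m ℝ}

theorem exists_pos_mulVec_neg_of_schur (hA : IsMetzlerStable A) (hB : ∀ i j, 0 ≤ B i j)
    {w : m → ℝ} (hw : 0 ≤ w) (hSw : ∀ i, ((D - C * A⁻¹ * B) *ᵥ w) i < 0) :
    ∃ v : l → ℝ, (∀ i, 0 < v i) ∧ (∀ i, (A *ᵥ v) i + (B *ᵥ w) i < 0) ∧
      ∀ i, (C *ᵥ v) i + (D *ᵥ w) i < 0 := by
  obtain ⟨u, hu, hAu⟩ := hA.1.exists_pos_mulVec_neg hA.2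
  obtain ⟨ε, hε, hSwε⟩ := exists_pos_forall_add_mul_neg hSw (C *ᵥ u)
  have hN : ∀ i j, 0 ≤ (-A⁻¹) i j := fun i j => neg_nonneg.2 (hA.1.inv_apply_nonpos hA.2 i j)
  have hx : ∀ i, 0 ≤ (-(A⁻¹ *ᵥ B *ᵥ w)) i := by
    rw [← neg_mulVec]
    exact mulVec_nonneg hN (mulVec_nonneg hB hw)
  have hAx : A *ᵥ -(A⁻¹ *ᵥ B *ᵥ w) = -(B *ᵥ w) := by
    rw [mulVec_neg, mulVec_mulVec, mul_nonsing_inv A hA.2.isUnit_det, one_mulVec]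
  refine ⟨-(A⁻¹ *ᵥ B *ᵥ w) + ε • u, fun i => ?_, fun i => ?_, fun i => ?_⟩
  · simp only [Pi.add_apply, Pi.smul_apply, smul_eq_mul]
    linarith [hx i, mul_pos hε (hu i)]
  · simp only [mulVec_add, mulVec_smul, hAx, Pi.add_apply, Pi.neg_apply, Pi.smul_apply,
      smul_eq_mul]
    linarith [mul_neg_of_pos_of_neg hε (hAu i)]
  · have := congr_fun (schur_complement_mulVec A B C D w) i
    simp only [mulVec_add, mulVec_smul, Pi.add_apply, Pi.smul_apply, smul_eq_mul] at this ⊢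
    linarith [hSwε i]

variable [DecidableEq m]

theorem IsMetzler.fromBlocks₁₁ (h : IsMetzler (fromBlocks A B C D)) : IsMetzler A :=
  fun i j hij => h (.inl i) (.inl j) (by simpa using hij)

theorem IsMetzler.fromBlocks₂₂ (h : IsMetzler (fromBlocks A B C D)) : IsMetzler D :=
  fun i j hij => h (.inr i) (.inr j) (by simpa using hij)

theorem IsMetzler.fromBlocks₁₂_nonneg (h : IsMetzler (fromBlocks A B C D)) (i : l) (j : m) :
    0 ≤ B i j :=
  h (.inl i) (.inr j) (by simp)

theorem IsMetzler.fromBlocks₂₁_nonneg (h : IsMetzler (fromBlocks A B C D)) (i : m) (j : l) :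
    0 ≤ C i j :=
  h (.inr i) (.inl j) (by simp)

theorem isMetzlerStable_schur_of_mulVec_neg (hA : IsMetzler A) (hB : ∀ i j, 0 ≤ B i j)
    (hC : ∀ i j, 0 ≤ C i j) (hD : IsMetzler D) {v₁ : l → ℝ} {v₂ : m → ℝ}
    (hv₁ : ∀ i, 0 < v₁ i) (hv₂ : ∀ i, 0 < v₂ i) (h₁ : ∀ i, (A *ᵥ v₁) i + (B *ᵥ v₂) i < 0)
    (h₂ : ∀ i, (C *ᵥ v₁) i + (D *ᵥ v₂) i < 0) :
    IsMetzlerStable A ∧ IsMetzlerStable (D - C * A⁻¹ * B) := by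
  have hBv : ∀ i, 0 ≤ (B *ᵥ v₂) i := mulVec_nonneg hB fun j => (hv₂ j).le
  have hAH : IsHurwitzStable A :=
    hA.isHurwitzStable_of_mulVec_neg hv₁ fun i => by linarith [h₁ i, hBv i]
  have hN : ∀ i j, 0 ≤ (-A⁻¹) i j := fun i j => neg_nonneg.2 (hA.inv_apply_nonpos hAH i j)
  have hx : -(A⁻¹ *ᵥ B *ᵥ v₂) ≤ v₁ :=
    calc -(A⁻¹ *ᵥ B *ᵥ v₂) = -A⁻¹ *ᵥ B *ᵥ v₂ := (neg_mulVec _ _).symm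
      _ ≤ -A⁻¹ *ᵥ -(A *ᵥ v₁) := mulVec_mono hN fun i => by rw [Pi.neg_apply]; linarith [h₁ i]
      _ = v₁ := by
        rw [mulVec_neg, neg_mulVec, neg_neg, mulVec_mulVec, nonsing_inv_mul A hAH.isUnit_det,
          one_mulVec]
  have hSM : IsMetzler (D - C * A⁻¹ * B) := by
    rw [sub_eq_add_neg, ← Matrix.neg_mul, ← Matrix.mul_neg]
    exact hD.add_of_nonneg (mul_apply_nonneg (mul_apply_nonneg hC hN) hB)
  refine ⟨⟨hA, hAH⟩, hSM, hSM.isHurwitzStable_of_mulVec_neg hv₂ fun i => ?_⟩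
  rw [schur_complement_mulVec, Pi.add_apply]
  linarith [mulVec_mono hC hx i, h₂ i]

end Blocks

theorem metzler_block_criterion_general
    {l m : Type*} [Fintype l] [Fintype m] [DecidableEq l] [DecidableEq m]
    (A : Matrix l l ℝ) (B : Matrix l m ℝ) (C : Matrix m l ℝ) (D : Matrix m m ℝ)
    (hM : IsMetzler (Matrix.fromBlocks A B C D)) :
    IsMetzlerStable (Matrix.fromBlocks A B C D) ↔
      IsMetzlerStable A ∧ IsMetzlerStable (D - C * A⁻¹ * B) := by
  constructor
  · rintro ⟨-, hMH⟩
    obtain ⟨v, hv, hMv⟩ := hM.exists_pos_mulVec_neg hMH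
    rw [fromBlocks_mulVec] at hMv
    exact isMetzlerStable_schur_of_mulVec_neg hM.fromBlocks₁₁ hM.fromBlocks₁₂_nonneg
      hM.fromBlocks₂₁_nonneg hM.fromBlocks₂₂ (fun _ => hv _) (fun _ => hv _)
      (fun i => hMv (.inl i)) (fun i => hMv (.inr i))
  · rintro ⟨hA, hS⟩
    obtain ⟨w, hw, hSw⟩ := hS.1.exists_pos_mulVec_neg hS.2
    obtain ⟨v, hv, htop, hbot⟩ :=
      exists_pos_mulVec_neg_of_schur hA hM.fromBlocks₁₂_nonneg (fun i => (hw i).le) hSw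
    refine ⟨hM, hM.isHurwitzStable_of_mulVec_neg (v := Sum.elim v w) ?_ ?_⟩
    · rintro (i | i)
      exacts [hv i, hw i]
    · rw [fromBlocks_mulVec]
      rintro (i | i)
      exacts [htop i, hbot i]

/-- **Proposition 3.1 (Metzler block criterion).** Let `M = [[A, B], [C, D]]` be a Metzler
matrix in block form with `A` and `D` square. If `A` is invertible (which holds in
particular whenever `A` is Metzler-stable), then `M` is Metzler-stable if and only if both
`A` and the Schur complement `D − C·A⁻¹·B` are Metzler-stable. -/
theorem metzler_block_criterion
    {l m : Type*} [Fintype l] [Fintype m] [DecidableEq l] [DecidableEq m]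
    (A : Matrix l l ℝ) (B : Matrix l m ℝ) (C : Matrix m l ℝ) (D : Matrix m m ℝ)
    (hM : IsMetzler (Matrix.fromBlocks A B C D))
    (hA : IsUnit A.det) :
    IsMetzlerStable (Matrix.fromBlocks A B C D) ↔
      IsMetzlerStable A ∧ IsMetzlerStable (D - C * A⁻¹ * B) :=
  metzler_block_criterion_general A B C D hM
end

section
/- (Metzler property and spectrum of P; Condition 2) Let σ_e, γ_a, β_a > 0, c12 > 0, r ∈ (0,1), θ_l ∈ (0,1], and let P be the real 4×4 matrix [[−σ_e, c12, β_a θ_l, β_a θ_l], [0, −c12 − σ_e, 0, 0], [(1−r)σ_e, 0, −γ_a, c12], [0, (1−r)σ_e, 0, −c12 − γ_a]]. Then P is a Metzler matrix; its eigenvalues are −c12 − γ_a, −c12 − σ_e, and −(γ_a + σ_e)/2 ± (1/2)·√((γ_a − σ_e)² + 4(1−r)β_a σ_e θ_l); and all eigenvalues of P have strictly negative real part if and only if (1−r)β_a θ_l / γ_a < 1. -/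
open Polynomial Matrix

/-- Determinant of a 4×4 matrix, expanded along the first row. -/
lemma det_fin_four' {R : Type*} [CommRing R] (A : Matrix (Fin 4) (Fin 4) R) :
    A.det =
      A 0 0 * (A 1 1 * (A 2 2 * A 3 3 - A 2 3 * A 3 2) - A 1 2 * (A 2 1 * A 3 3 - A 2 3 * A 3 1)
        + A 1 3 * (A 2 1 * A 3 2 - A 2 2 * A 3 1))
      - A 0 1 * (A 1 0 * (A 2 2 * A 3 3 - A 2 3 * A 3 2) - A 1 2 * (A 2 0 * A 3 3 - A 2 3 * A 3 0)
        + A 1 3 * (A 2 0 * A 3 2 - A 2 2 * A 3 0))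
      + A 0 2 * (A 1 0 * (A 2 1 * A 3 3 - A 2 3 * A 3 1) - A 1 1 * (A 2 0 * A 3 3 - A 2 3 * A 3 0)
        + A 1 3 * (A 2 0 * A 3 1 - A 2 1 * A 3 0))
      - A 0 3 * (A 1 0 * (A 2 1 * A 3 2 - A 2 2 * A 3 1) - A 1 1 * (A 2 0 * A 3 2 - A 2 2 * A 3 0)
        + A 1 2 * (A 2 0 * A 3 1 - A 2 1 * A 3 0)) := by
  rw [Matrix.det_succ_row_zero]
  simp only [Fin.sum_univ_succ, Fin.sum_univ_zero, det_fin_three, submatrix_apply,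
    Fin.succ_zero_eq_one, Fin.succ_one_eq_two, Fin.zero_succAbove, Fin.succ_succAbove_zero,
    Fin.succ_succAbove_one, Fin.val_zero, Fin.val_succ, Fin.val_one,
    show ((2:Fin 3).succ) = (3:Fin 4) from rfl,
    show Fin.succAbove (2:Fin 4) (2:Fin 3) = 3 from rfl,
    show Fin.succAbove (1:Fin 4) (2:Fin 3) = 3 from rfl,
    show Fin.castSucc (2:Fin 3) = (2:Fin 4) from rfl,
    show Fin.succAbove (3:Fin 4) (2:Fin 3) = 2 from rfl]
  norm_num
  ring

/-- **Metzler property and spectrum of `P`; Condition 2.** For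
`P = [[−σe, c12, βa θl, βa θl], [0, −c12 − σe, 0, 0], [(1−r)σe, 0, −γa, c12],
[0, (1−r)σe, 0, −c12 − γa]]`: `P` is a Metzler matrix; its eigenvalues are
`−c12 − γa`, `−c12 − σe` and `−(γa + σe)/2 ± (1/2)·√((γa − σe)² + 4(1−r)βa σe θl)`;
and all eigenvalues of `P` have strictly negative real part if and only if
`(1−r)βa θl / γa < 1`. -/
theorem P_metzler_spectrum_condition2
    (σe γa βa c12 r θl : ℝ)
    (hσe : 0 < σe) (hγa : 0 < γa) (hβa : 0 < βa) (hc12 : 0 < c12)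
    (hr : r ∈ Set.Ioo (0 : ℝ) 1) (hθl : θl ∈ Set.Ioc (0 : ℝ) 1)
    (P : Matrix (Fin 4) (Fin 4) ℝ)
    (hP : P = !![-σe, c12, βa * θl, βa * θl;
                 0, -c12 - σe, 0, 0;
                 (1 - r) * σe, 0, -γa, c12;
                 0, (1 - r) * σe, 0, -c12 - γa]) :
    IsMetzler P
      ∧ (∀ z : ℂ, (P.charpoly.map (algebraMap ℝ ℂ)).IsRoot z ↔
          z ∈ ({((-c12 - γa : ℝ) : ℂ), ((-c12 - σe : ℝ) : ℂ),
            ((-(γa + σe) / 2 +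
              Real.sqrt ((γa - σe) ^ 2 + 4 * (1 - r) * βa * σe * θl) / 2 : ℝ) : ℂ),
            ((-(γa + σe) / 2 -
              Real.sqrt ((γa - σe) ^ 2 + 4 * (1 - r) * βa * σe * θl) / 2 : ℝ) : ℂ)} : Set ℂ))
      ∧ ((∀ z : ℂ, (P.charpoly.map (algebraMap ℝ ℂ)).IsRoot z → z.re < 0)
          ↔ (1 - r) * βa * θl / γa < 1) := by
  obtain ⟨hr0, hr1⟩ := hr
  obtain ⟨hθ0, hθ1⟩ := hθl
  have hΔ0 : 0 ≤ (γa - σe) ^ 2 + 4 * (1 - r) * βa * σe * θl := by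
    nlinarith [sq_nonneg (γa - σe),
      mul_pos (mul_pos (mul_pos (show (0:ℝ) < 1 - r by linarith) hβa) hσe) hθ0]
  obtain ⟨s, hsdef⟩ : ∃ x : ℝ, x = Real.sqrt ((γa - σe) ^ 2 + 4 * (1 - r) * βa * σe * θl) :=
    ⟨_, rfl⟩
  have hs2 : s ^ 2 = (γa - σe) ^ 2 + 4 * (1 - r) * βa * σe * θl := by
    rw [hsdef]; exact Real.sq_sqrt hΔ0
  have hs0 : 0 ≤ s := hsdef ▸ Real.sqrt_nonneg _
  obtain ⟨ρ3, hρ3⟩ : ∃ x : ℝ, x = -(γa + σe) / 2 + s / 2 := ⟨_, rfl⟩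
  obtain ⟨ρ4, hρ4⟩ : ∃ x : ℝ, x = -(γa + σe) / 2 - s / 2 := ⟨_, rfl⟩
  -- quadratic factor over ℝ
  have hquad : (X - C ρ3) * (X - C ρ4)
      = X ^ 2 + C (γa + σe) * X + C (γa * σe - (1 - r) * βa * σe * θl) := by
    have hsum : ρ3 + ρ4 = -(γa + σe) := by rw [hρ3, hρ4]; ring
    have hprod : ρ3 * ρ4 = γa * σe - (1 - r) * βa * σe * θl := by
      rw [hρ3, hρ4]; linear_combination (-(1:ℝ)/4) * hs2
    have hexp : (X - C ρ3) * (X - C ρ4)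
        = X ^ 2 - (C ρ3 + C ρ4) * X + C ρ3 * C ρ4 := by ring
    rw [hexp, ← C_add, ← C_mul, hsum, hprod, map_neg]; ring
  -- characteristic polynomial
  have hcp : P.charpoly
      = (X + C (c12 + γa)) * (X + C (c12 + σe)) * ((X - C ρ3) * (X - C ρ4)) := by
    rw [hquad, Matrix.charpoly, det_fin_four']
    simp [charmatrix_apply, Matrix.diagonal_apply, hP]
    ring
  -- mapped to ℂ
  have hmap : P.charpoly.map (algebraMap ℝ ℂ)
      = (X + C ((c12 + γa : ℝ) : ℂ)) * (X + C ((c12 + σe : ℝ) : ℂ))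
        * ((X - C ((ρ3 : ℝ) : ℂ)) * (X - C ((ρ4 : ℝ) : ℂ))) := by
    rw [hcp]
    simp only [Polynomial.map_mul, Polynomial.map_add, Polynomial.map_sub, Polynomial.map_X,
      Polynomial.map_C, Complex.coe_algebraMap]
  -- root classification
  have hroot : ∀ z : ℂ, (P.charpoly.map (algebraMap ℝ ℂ)).IsRoot z ↔
      z ∈ ({((-c12 - γa : ℝ) : ℂ), ((-c12 - σe : ℝ) : ℂ),
        ((ρ3 : ℝ) : ℂ), ((ρ4 : ℝ) : ℂ)} : Set ℂ) := by
    intro z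
    rw [Polynomial.IsRoot, hmap]
    simp only [Polynomial.eval_mul, Polynomial.eval_add, Polynomial.eval_sub, Polynomial.eval_X,
      Polynomial.eval_C, mul_eq_zero, Set.mem_insert_iff, Set.mem_singleton_iff]
    constructor
    · rintro ((h | h) | (h | h))
      · left; push_cast at h ⊢; linear_combination h
      · right; left; push_cast at h ⊢; linear_combination h
      · right; right; left; linear_combination h
      · right; right; right; linear_combination h
    · rintro (h | h | h | h)
      · left; left; rw [h]; push_cast; ring
      · left; right; rw [h]; push_cast; ring
      · right; left; rw [h]; ring
      · right; right; rw [h]; ring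
  refine ⟨?_, ?_, ?_⟩
  · -- Metzler
    intro i j hij
    fin_cases i <;> fin_cases j <;>
      first
        | exact absurd rfl hij
        | (simp [hP]; first | positivity | nlinarith)
        | (simp [hP])
  · intro z; rw [hroot z, hρ3, hρ4, hsdef]
  · have hρ43 : ρ4 ≤ ρ3 := by rw [hρ3, hρ4]; linarith
    constructor
    · intro h
      have h3 : (((ρ3 : ℝ) : ℂ)).re < 0 := by
        apply h
        rw [hroot]
        simp
      have hρ3neg : ρ3 < 0 := by simpa using h3
      have hslt : s < γa + σe := by rw [hρ3] at hρ3neg; linarith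
      have hkey : (1 - r) * βa * θl < γa := by
        have h1 : 4 * (1 - r) * βa * σe * θl < 4 * (γa * σe) := by nlinarith
        nlinarith
      rw [div_lt_one hγa]; exact hkey
    · intro h z hz
      have hkey : (1 - r) * βa * θl < γa := (div_lt_one hγa).mp h
      have h1 : (1 - r) * βa * σe * θl < γa * σe := by nlinarith
      have hΔlt : s ^ 2 < (γa + σe) ^ 2 := by rw [hs2]; nlinarith
      have hslt : s < γa + σe := by nlinarith
      have hρ3neg : ρ3 < 0 := by rw [hρ3]; linarith
      rw [hroot] at hz
      simp only [Set.mem_insert_iff, Set.mem_singleton_iff] at hz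
      rcases hz with h' | h' | h' | h' <;> rw [h'] <;> simp only [Complex.ofReal_re] <;> linarith
end

section
/- (Schur complement computation S − R·P⁻¹·Q) Let σ_e, σ_i, γ_a, γ_h, δ_h, β_a, β_i, β_h > 0, c12 > 0, r ∈ (0,1), q ∈ (0,1), θ_l ∈ (0,1], and assume (1−r)β_a θ_l / γ_a < 1 (so that P is invertible). With P = [[−σ_e, c12, β_a θ_l, β_a θ_l], [0, −c12 − σ_e, 0, 0], [(1−r)σ_e, 0, −γ_a, c12], [0, (1−r)σ_e, 0, −c12 − γ_a]], Q = the 4×4 matrix with first row (β_i θ_l, β_i θ_l, β_h θ_l, β_h θ_l) and all other rows zero, R = the 4×4 matrix with (1,1) and (2,2) entries rσ_e and all other entries zero, and S = [[−σ_i, c12, 0, 0], [0, −c12 − σ_i, 0, 0], [qσ_i, 0, −δ_h − γ_h, c12], [0, qσ_i, 0, −c12 − δ_h − γ_h]], one has S − R·P⁻¹·Q = [[d − σ_i, c12 + d, e, e], [0, −c12 − σ_i, 0, 0], [qσ_i, 0, −δ_h − γ_h, c12], [0, qσ_i, 0, −c12 − δ_h − γ_h]], where d = β_i γ_a r θ_l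 / (γ_a − (1−r)β_a θ_l) and e = β_h γ_a r θ_l / (γ_a − (1−r)β_a θ_l). -/
/-!
`Q` has rank one, `Q = e₀ vᵀ` with `v = (βi θl, βi θl, βh θl, βh θl)`, so
`R P⁻¹ Q = (R P⁻¹ e₀) vᵀ` and only the first column `u = P⁻¹ e₀` of `P⁻¹` is needed.
Solving `P u = e₀` gives `u = (−γa / (σe D), 0, −(1−r) / D, 0)` with `D = γa − (1−r)βa θl`,
hence `R u = (−r γa / D) e₀`, which adds `r γa / D · v` to the first row of `S`.
The hypothesis `(1−r)βa θl / γa < 1` makes `D > 0`, and `det P = (c12 + σe)(c12 + γa) σe D`,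
so `P` is invertible.
-/

open Matrix

def blockP (σe γa βa c12 r θl : ℝ) : Matrix (Fin 4) (Fin 4) ℝ :=
  !![-σe, c12, βa * θl, βa * θl;
     0, -c12 - σe, 0, 0;
     (1 - r) * σe, 0, -γa, c12;
     0, (1 - r) * σe, 0, -c12 - γa]

theorem det_blockP (σe γa βa c12 r θl : ℝ) :
    (blockP σe γa βa c12 r θl).det =
      (c12 + σe) * (c12 + γa) * (σe * (γa - (1 - r) * βa * θl)) := by
  rw [blockP, det_succ_row_zero]
  simp [Fin.sum_univ_succ, det_fin_three, Fin.succAbove]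
  ring

theorem blockP_mulVec_firstCol_inv {σe γa βa r θl : ℝ} (c12 : ℝ) (hσe : σe ≠ 0)
    (hD : γa - (1 - r) * βa * θl ≠ 0) :
    blockP σe γa βa c12 r θl *ᵥ
        ![-γa / (σe * (γa - (1 - r) * βa * θl)), 0, -(1 - r) / (γa - (1 - r) * βa * θl), 0] =
      ![1, 0, 0, 0] := by
  ext i
  fin_cases i <;> simp [blockP, Fin.sum_univ_four, mulVec, dotProduct] <;> field_simp <;> ring

theorem firstRow_eq_vecMulVec {α : Type*} [MulZeroOneClass α] (a b c e : α) :
    !![a, b, c, e; 0, 0, 0, 0; 0, 0, 0, 0; 0, 0, 0, 0] = vecMulVec ![1, 0, 0, 0] ![a, b, c, e] := by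
  ext i j
  fin_cases i <;> fin_cases j <;> simp [vecMulVec_apply]

theorem schur_complement_SRPQ_general
    (σe σi γa γh δh βa βi βh c12 r q θl : ℝ)
    (hσe : 0 < σe) (hγa : 0 < γa) (hc12 : 0 < c12)
    (hcond2 : (1 - r) * βa * θl / γa < 1)
    (P Q R S : Matrix (Fin 4) (Fin 4) ℝ)
    (hP : P = !![-σe, c12, βa * θl, βa * θl;
                 0, -c12 - σe, 0, 0;
                 (1 - r) * σe, 0, -γa, c12;
                 0, (1 - r) * σe, 0, -c12 - γa])
    (hQ : Q = !![βi * θl, βi * θl, βh * θl, βh * θl;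
                 0, 0, 0, 0;
                 0, 0, 0, 0;
                 0, 0, 0, 0])
    (hR : R = !![r * σe, 0, 0, 0;
                 0, r * σe, 0, 0;
                 0, 0, 0, 0;
                 0, 0, 0, 0])
    (hS : S = !![-σi, c12, 0, 0;
                 0, -c12 - σi, 0, 0;
                 q * σi, 0, -δh - γh, c12;
                 0, q * σi, 0, -c12 - δh - γh])
    (d e : ℝ)
    (hd : d = βi * γa * r * θl / (γa - (1 - r) * βa * θl))
    (he : e = βh * γa * r * θl / (γa - (1 - r) * βa * θl)) :
    S - R * P⁻¹ * Q = !![d - σi, c12 + d, e, e;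
                         0, -c12 - σi, 0, 0;
                         q * σi, 0, -δh - γh, c12;
                         0, q * σi, 0, -c12 - δh - γh] := by
  have hD : 0 < γa - (1 - r) * βa * θl := by
    linarith [(div_lt_one hγa).mp hcond2]
  have hP' : P = blockP σe γa βa c12 r θl := hP
  have hdet : IsUnit P.det := by
    rw [hP', det_blockP]
    exact isUnit_iff_ne_zero.mpr (by positivity)
  have := P.invertibleOfIsUnitDet hdet
  have hfirstCol : P⁻¹ *ᵥ ![1, 0, 0, 0] =
      ![-γa / (σe * (γa - (1 - r) * βa * θl)), 0, -(1 - r) / (γa - (1 - r) * βa * θl), 0] :=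
    inv_mulVec_eq_vec (by rw [hP', blockP_mulVec_firstCol_inv c12 hσe.ne' hD.ne'])
  have hRu : R *ᵥ (P⁻¹ *ᵥ ![1, 0, 0, 0]) = ![-(r * γa / (γa - (1 - r) * βa * θl)), 0, 0, 0] := by
    rw [hfirstCol, hR]
    ext i
    fin_cases i <;> simp [mulVec, dotProduct, Fin.sum_univ_four]
    field_simp
  rw [hQ, firstRow_eq_vecMulVec, Matrix.mul_assoc, mul_vecMulVec, mul_vecMulVec, hRu, hS, hd, he]
  ext i j
  fin_cases i <;> fin_cases j <;> simp <;> ring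

/-- **Schur complement computation `S − R·P⁻¹·Q`.** With the blocks `P, Q, R, S` of the
infected-compartment matrix `A22 = [[P, Q], [R, S]]` of the Jacobian of the 2-group
behavior model at the Group 1-only disease-free equilibrium, and assuming Condition 2
`(1−r)βa θl / γa < 1` (so that `P` is invertible), one has
`S − R·P⁻¹·Q = [[d − σi, c12 + d, e, e], [0, −c12 − σi, 0, 0], [qσi, 0, −δh − γh, c12],
[0, qσi, 0, −c12 − δh − γh]]`, where `d = βi γa r θl / (γa − (1−r)βa θl)` and
`e = βh γa r θl / (γa − (1−r)βa θl)`. -/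
theorem schur_complement_SRPQ
    (σe σi γa γh δh βa βi βh c12 r q θl : ℝ)
    (hσe : 0 < σe) (hσi : 0 < σi) (hγa : 0 < γa) (hγh : 0 < γh) (hδh : 0 < δh)
    (hβa : 0 < βa) (hβi : 0 < βi) (hβh : 0 < βh) (hc12 : 0 < c12)
    (hr : r ∈ Set.Ioo (0 : ℝ) 1) (hq : q ∈ Set.Ioo (0 : ℝ) 1)
    (hθl : θl ∈ Set.Ioc (0 : ℝ) 1)
    (hcond2 : (1 - r) * βa * θl / γa < 1)
    (P Q R S : Matrix (Fin 4) (Fin 4) ℝ)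
    (hP : P = !![-σe, c12, βa * θl, βa * θl;
                 0, -c12 - σe, 0, 0;
                 (1 - r) * σe, 0, -γa, c12;
                 0, (1 - r) * σe, 0, -c12 - γa])
    (hQ : Q = !![βi * θl, βi * θl, βh * θl, βh * θl;
                 0, 0, 0, 0;
                 0, 0, 0, 0;
                 0, 0, 0, 0])
    (hR : R = !![r * σe, 0, 0, 0;
                 0, r * σe, 0, 0;
                 0, 0, 0, 0;
                 0, 0, 0, 0])
    (hS : S = !![-σi, c12, 0, 0;
                 0, -c12 - σi, 0, 0;
                 q * σi, 0, -δh - γh, c12;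
                 0, q * σi, 0, -c12 - δh - γh])
    (d e : ℝ)
    (hd : d = βi * γa * r * θl / (γa - (1 - r) * βa * θl))
    (he : e = βh * γa * r * θl / (γa - (1 - r) * βa * θl)) :
    S - R * P⁻¹ * Q = !![d - σi, c12 + d, e, e;
                         0, -c12 - σi, 0, 0;
                         q * σi, 0, -δh - γh, c12;
                         0, q * σi, 0, -c12 - δh - γh] :=
  schur_complement_SRPQ_general σe σi γa γh δh βa βi βh c12 r q θl hσe hγa hc12 hcond2 P Q R S hP hQ
    hR hS d e hd he
end

section
/- (Metzler property of Z − Y·W⁻¹·X under Condition 3) Let σ_i, γ_a, γ_h, δ_h, β_a, β_i, β_h > 0, c12 > 0, r ∈ (0,1), q ∈ (0,1), θ_l ∈ (0,1], and assume rβ_i θ_l / σ_i + (1−r)β_a θ_l / γ_a < 1. With W = [[d − σ_i, c12 + d], [0, −c12 − σ_i]], X = [[e, e], [0, 0]], Y = qσ_i·I₂, Z = [[−δ_h − γ_h, c12], [0, −c12 − δ_h − γ_h]], where d = β_i γ_a r θ_l / (γ_a − (1−r)β_a θ_l) and e = β_h γ_a r θ_l / (γ_a − (1−r)β_a θ_l),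 the matrix Z − Y·W⁻¹·X equals [[f − γ_h − δ_h, c12 + f], [0, −c12 − δ_h − γ_h]] with f = β_h γ_a r q σ_i θ_l / (−β_i γ_a r θ_l + σ_i(γ_a − (1−r)β_a θ_l)), and this matrix is a Metzler matrix. -/
/-! Clearing denominators, Condition 3 says exactly that `E = σi D − βi γa r θl > 0`, where
`D = γa − (1−r) βa θl`; hence `D > 0` too. The block `W` is upper triangular with pivot
`d − σi = −E / D ≠ 0`, and `X` vanishes off its first row, so subtracting `Y W⁻¹ X` only shifts
the first row of `Z` by `f = −q σi e / (d − σi) = βh γa r q σi θl / E > 0`. -/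

theorem Matrix.inv_upperTriangular_mul_firstRow {K : Type*} [Field K] {a c : K} (b x y : K)
    (ha : a ≠ 0) (hc : c ≠ 0) :
    (!![a, b; 0, c])⁻¹ * !![x, y; 0, 0] = !![x / a, y / a; 0, 0] := by
  have hdet : IsUnit (!![a, b; 0, c]).det := by
    simpa [Matrix.det_fin_two_of] using mul_ne_zero ha hc
  have hmul : !![a, b; 0, c] * !![x / a, y / a; 0, 0] = !![x, y; 0, 0] := by
    simp [mul_div_cancel₀ _ ha]
  rw [← hmul]
  exact Matrix.nonsing_inv_mul_cancel_left _ _ hdet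

theorem isMetzler_upperTriangular_fin_two {a b c : ℝ} (hb : 0 ≤ b) :
    IsMetzler !![a, b; 0, c] := by
  intro i j hij
  fin_cases i <;> fin_cases j <;> simp_all

theorem condition3_denominator_pos {σi γa βa βi r θl : ℝ} (hσi : 0 < σi) (hγa : 0 < γa)
    (hcond3 : r * βi * θl / σi + (1 - r) * βa * θl / γa < 1) :
    0 < -(βi * γa * r * θl) + σi * (γa - (1 - r) * βa * θl) := by
  rw [div_add_div _ _ hσi.ne' hγa.ne', div_lt_one (mul_pos hσi hγa)] at hcond3
  linarith

theorem ZYWX_metzler_general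
    (σi γa γh δh βa βi βh c12 r q θl : ℝ)
    (hσi : 0 < σi) (hγa : 0 < γa)
    (hβi : 0 < βi) (hβh : 0 < βh) (hc12 : 0 < c12)
    (hr : r ∈ Set.Ioo (0 : ℝ) 1) (hq : q ∈ Set.Ioo (0 : ℝ) 1)
    (hθl : θl ∈ Set.Ioc (0 : ℝ) 1)
    (hcond3 : r * βi * θl / σi + (1 - r) * βa * θl / γa < 1)
    (d e f : ℝ)
    (hd : d = βi * γa * r * θl / (γa - (1 - r) * βa * θl))
    (he : e = βh * γa * r * θl / (γa - (1 - r) * βa * θl))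
    (hf : f = βh * γa * r * q * σi * θl /
      (-(βi * γa * r * θl) + σi * (γa - (1 - r) * βa * θl)))
    (W X Y Z : Matrix (Fin 2) (Fin 2) ℝ)
    (hW : W = !![d - σi, c12 + d; 0, -c12 - σi])
    (hX : X = !![e, e; 0, 0])
    (hY : Y = (q * σi) • (1 : Matrix (Fin 2) (Fin 2) ℝ))
    (hZ : Z = !![-δh - γh, c12; 0, -c12 - δh - γh]) :
    Z - Y * W⁻¹ * X = !![f - γh - δh, c12 + f; 0, -c12 - δh - γh]
      ∧ IsMetzler (!![f - γh - δh, c12 + f; 0, -c12 - δh - γh] :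
          Matrix (Fin 2) (Fin 2) ℝ) := by
  obtain ⟨hr, -⟩ := hr
  obtain ⟨hq, -⟩ := hq
  obtain ⟨hθl, -⟩ := hθl
  set D := γa - (1 - r) * βa * θl
  set E := -(βi * γa * r * θl) + σi * D with hE_def
  have hE : 0 < E := condition3_denominator_pos hσi hγa hcond3
  have hD : 0 < D := by
    have hnum : 0 < βi * γa * r * θl := by positivity
    exact pos_of_mul_pos_right (by linarith : 0 < σi * D) hσi.le
  have hpivot : d - σi = -E / D := by
    rw [hd, hE_def]
    field_simp
    ring
  have hf_pivot : f = -(q * σi * e) / (d - σi) := by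
    rw [hpivot, hf, he]
    field_simp
  have hf_pos : 0 < f := hf ▸ by positivity
  refine ⟨?_, isMetzler_upperTriangular_fin_two (by positivity)⟩
  have hpivot_ne : d - σi ≠ 0 := hpivot ▸ div_ne_zero (neg_ne_zero.2 hE.ne') hD.ne'
  rw [hZ, hY, hW, hX, Matrix.mul_assoc,
    Matrix.inv_upperTriangular_mul_firstRow _ _ _ hpivot_ne (by linarith), Matrix.smul_mul, one_mul]
  ext i j
  fin_cases i <;> fin_cases j <;> simp [hf_pivot] <;> ring

/-- **Metzler property of `Z − Y·W⁻¹·X` under Condition 3.** With the blocks `W, X, Y, Z`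
of the Schur complement `S − R·P⁻¹·Q = [[W, X], [Y, Z]]` and assuming Condition 3
`rβi θl / σi + (1−r)βa θl / γa < 1`, the matrix `Z − Y·W⁻¹·X` equals
`[[f − γh − δh, c12 + f], [0, −c12 − δh − γh]]` with
`f = βh γa r q σi θl / (−βi γa r θl + σi (γa − (1−r)βa θl))`, and this matrix is
Metzler. -/
theorem ZYWX_metzler
    (σi γa γh δh βa βi βh c12 r q θl : ℝ)
    (hσi : 0 < σi) (hγa : 0 < γa) (hγh : 0 < γh) (hδh : 0 < δh)
    (hβa : 0 < βa) (hβi : 0 < βi) (hβh : 0 < βh) (hc12 : 0 < c12)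
    (hr : r ∈ Set.Ioo (0 : ℝ) 1) (hq : q ∈ Set.Ioo (0 : ℝ) 1)
    (hθl : θl ∈ Set.Ioc (0 : ℝ) 1)
    (hcond3 : r * βi * θl / σi + (1 - r) * βa * θl / γa < 1)
    (d e f : ℝ)
    (hd : d = βi * γa * r * θl / (γa - (1 - r) * βa * θl))
    (he : e = βh * γa * r * θl / (γa - (1 - r) * βa * θl))
    (hf : f = βh * γa * r * q * σi * θl /
      (-(βi * γa * r * θl) + σi * (γa - (1 - r) * βa * θl)))
    (W X Y Z : Matrix (Fin 2) (Fin 2) ℝ)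
    (hW : W = !![d - σi, c12 + d; 0, -c12 - σi])
    (hX : X = !![e, e; 0, 0])
    (hY : Y = (q * σi) • (1 : Matrix (Fin 2) (Fin 2) ℝ))
    (hZ : Z = !![-δh - γh, c12; 0, -c12 - δh - γh]) :
    Z - Y * W⁻¹ * X = !![f - γh - δh, c12 + f; 0, -c12 - δh - γh]
      ∧ IsMetzler (!![f - γh - δh, c12 + f; 0, -c12 - δh - γh] :
          Matrix (Fin 2) (Fin 2) ℝ) :=
  ZYWX_metzler_general σi γa γh δh βa βi βh c12 r q θl hσi hγa hβi hβh hc12 hr hq hθl hcond3 d e f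
    hd he hf W X Y Z hW hX hY hZ
end

section
/- (Condition 4 and Hurwitz stability of Z − Y·W⁻¹·X) Let σ_i, γ_a, γ_h, δ_h, β_a, β_i, β_h > 0, c12 > 0, r ∈ (0,1), q ∈ (0,1), θ_l ∈ (0,1], and assume rβ_i θ_l / σ_i + (1−r)β_a θ_l / γ_a < 1. Then the eigenvalues of the 2×2 matrix [[f − γ_h − δ_h, c12 + f], [0, −c12 − δ_h − γ_h]], with f = β_h γ_a r q σ_i θ_l / (−β_i γ_a r θ_l + σ_i(γ_a − (1−r)β_a θ_l)), are f − γ_h − δ_h and −c12 − δ_h − γ_h, and both are strictly negative if and only if R_c := θ_l·( rβ_i/σ_i + (1−r)β_a/γ_a + rqβ_h/(γ_h+δ_h) ) < 1. -/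
/-- **Condition 4 and Hurwitz stability of `Z − Y·W⁻¹·X`.** Assuming Condition 3
`rβi θl / σi + (1−r)βa θl / γa < 1`, the eigenvalues of the matrix
`[[f − γh − δh, c12 + f], [0, −c12 − δh − γh]]`, with
`f = βh γa r q σi θl / (−βi γa r θl + σi (γa − (1−r)βa θl))`, are `f − γh − δh` and
`−c12 − δh − γh`, and both are strictly negative if and only if
`R_c := θl (rβi/σi + (1−r)βa/γa + rqβh/(γh+δh)) < 1` (Condition 4). -/
theorem ZYWX_spectrum_condition4
    (σi γa γh δh βa βi βh c12 r q θl : ℝ)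
    (hσi : 0 < σi) (hγa : 0 < γa) (hγh : 0 < γh) (hδh : 0 < δh)
    (hβa : 0 < βa) (hβi : 0 < βi) (hβh : 0 < βh) (hc12 : 0 < c12)
    (hr : r ∈ Set.Ioo (0 : ℝ) 1) (hq : q ∈ Set.Ioo (0 : ℝ) 1)
    (hθl : θl ∈ Set.Ioc (0 : ℝ) 1)
    (hcond3 : r * βi * θl / σi + (1 - r) * βa * θl / γa < 1)
    (f : ℝ)
    (hf : f = βh * γa * r * q * σi * θl /
      (-(βi * γa * r * θl) + σi * (γa - (1 - r) * βa * θl)))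
    (M : Matrix (Fin 2) (Fin 2) ℝ)
    (hM : M = !![f - γh - δh, c12 + f; 0, -c12 - δh - γh]) :
    (∀ z : ℂ, (M.charpoly.map (algebraMap ℝ ℂ)).IsRoot z ↔
        (z = ((f - γh - δh : ℝ) : ℂ) ∨ z = ((-c12 - δh - γh : ℝ) : ℂ)))
      ∧ ((f - γh - δh < 0 ∧ -c12 - δh - γh < 0) ↔
          θl * (r * βi / σi + (1 - r) * βa / γa + r * q * βh / (γh + δh)) < 1) := by
  obtain ⟨hr0, hr1⟩ := hr
  obtain ⟨hq0, hq1⟩ := hq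
  obtain ⟨hθ0, hθ1⟩ := hθl
  constructor
  · intro z
    subst hM
    have hcp : Matrix.charpoly !![f - γh - δh, c12 + f; 0, -c12 - δh - γh]
        = (Polynomial.X - Polynomial.C (f - γh - δh))
          * (Polynomial.X - Polynomial.C (-c12 - δh - γh)) := by
      rw [Matrix.charpoly, Matrix.det_fin_two]
      rw [Matrix.charmatrix_apply_eq, Matrix.charmatrix_apply_eq,
        Matrix.charmatrix_apply_ne _ _ _ (by decide), Matrix.charmatrix_apply_ne _ _ _ (by decide)]
      simp
    rw [Polynomial.IsRoot.def, hcp]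
    have heval : Polynomial.eval z (((Polynomial.X - Polynomial.C (f - γh - δh))
        * (Polynomial.X - Polynomial.C (-c12 - δh - γh))).map (algebraMap ℝ ℂ))
        = (z - ((f - γh - δh : ℝ) : ℂ)) * (z - ((-c12 - δh - γh : ℝ) : ℂ)) := by
      simp [Polynomial.eval_map, Complex.coe_algebraMap]
    rw [heval, mul_eq_zero, sub_eq_zero, sub_eq_zero]
  · have hb : -c12 - δh - γh < 0 := by linarith
    -- denominator positivity
    rw [div_add_div _ _ hσi.ne' hγa.ne', div_lt_one (by positivity)] at hcond3
    have hD : 0 < -(βi * γa * r * θl) + σi * (γa - (1 - r) * βa * θl) := by nlinarith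
    have key : f < γh + δh ↔
        θl * (r * βi / σi + (1 - r) * βa / γa + r * q * βh / (γh + δh)) < 1 := by
      rw [hf, div_lt_iff₀ hD]
      have e : 1 - θl * (r * βi / σi + (1 - r) * βa / γa + r * q * βh / (γh + δh))
          = ((γh + δh) * (-(βi * γa * r * θl) + σi * (γa - (1 - r) * βa * θl))
              - βh * γa * r * q * σi * θl) / (σi * γa * (γh + δh)) := by
        field_simp
        ring
      constructor
      · intro h
        rw [← sub_pos, e]
        exact div_pos (by linarith) (by positivity)
      · intro h
        have h2 : 0 < 1 - θl * (r * βi / σi + (1 - r) * βa / γa + r * q * βh / (γh + δh)) := by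
          linarith
        rw [e, lt_div_iff₀ (by positivity), zero_mul] at h2
        linarith
    constructor
    · rintro ⟨h, -⟩; exact key.1 (by linarith)
    · intro h; exact ⟨by have := key.2 h; linarith, hb⟩
end
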